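/- arXiv:2409.18684 — 4 statements merged into one kernel-verified Lean document; each statement's English description precedes it below -/
import Mathlib

section
/- Let a < b be real numbers (or ±∞), let W be a finite signed measure on the interval (a,b), and let u : (a,b) → ℝ be a nonnegative increasing function. If W((t,b)) ≥ 0 for all t ∈ (a,b), then ∫_{(t,b)} u dW ≥ 0 for all t ∈ (a,b). -/
/-!
Write `W = μ - ν` for the Jordan decomposition. By the layer-cake formula it suffices to compare
`ν` and `μ` on the superlevel sets `{x ∈ (t, b) | s < u x}`. Since `u` is increasing, each of them
is `(c, b)` or `[c, b)` for some `c ≥ t`; the hypothesis gives `ν ≤ μ` on the former, and on the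
latter by continuity from above, as `[c, b) = ⋂ (r, b)` over `r ↑ c`.
-/

open MeasureTheory Set Filter

section LayerCake

variable {α : Type*} [MeasurableSpace α] {μ ν : Measure α} {f : α → ℝ}

theorem integral_le_integral_of_measure_lt_le (hfμ : Integrable f μ)
    (hfν : AEStronglyMeasurable f ν) (hμ : 0 ≤ᵐ[μ] f) (hν : 0 ≤ᵐ[ν] f)
    (h : ∀ s : ℝ, ν {x | s < f x} ≤ μ {x | s < f x}) :
    ∫ x, f x ∂ν ≤ ∫ x, f x ∂μ := by
  rw [integral_eq_lintegral_of_nonneg_ae hν hfν, integral_eq_lintegral_of_nonneg_ae hμ hfμ.1]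
  refine ENNReal.toReal_mono hfμ.lintegral_lt_top.ne ?_
  rw [lintegral_eq_lintegral_meas_lt ν hν hfν.aemeasurable,
    lintegral_eq_lintegral_meas_lt μ hμ hfμ.aemeasurable]
  exact lintegral_mono fun s => h s

end LayerCake

section UpwardClosed

variable {μ ν : Measure ℝ} [IsFiniteMeasure μ] [IsFiniteMeasure ν] {A B : Set ℝ}

theorem measure_Ici_inter_le_of_forall_Ioo (hB : MeasurableSet B) {t c : ℝ} (htc : t < c)
    (h : ∀ r ∈ Ioo t c, ν (Ioi r ∩ B) ≤ μ (Ioi r ∩ B)) :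
    ν (Ici c ∩ B) ≤ μ (Ici c ∩ B) := by
  obtain ⟨r, hr_mono, hr_mem, hr_lim⟩ := exists_seq_strictMono_tendsto' htc
  have hInter : ⋂ n, Ioi (r n) ∩ B = Ici c ∩ B := by
    rw [← iInter_inter]
    congr 1
    ext x
    simp only [mem_iInter, mem_Ioi, mem_Ici]
    exact ⟨fun hx => le_of_tendsto' hr_lim fun n => (hx n).le,
      fun hx n => (hr_mem n).2.trans_le hx⟩
  have hanti : Antitone fun n => Ioi (r n) ∩ B := fun m n hmn =>
    inter_subset_inter_left B (Ioi_subset_Ioi (hr_mono.monotone hmn))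
  have hmeas : ∀ (m : Measure ℝ) n, NullMeasurableSet (Ioi (r n) ∩ B) m := fun _ _ =>
    (measurableSet_Ioi.inter hB).nullMeasurableSet
  rw [← hInter]
  exact le_of_tendsto_of_tendsto'
    (tendsto_measure_iInter_atTop (hmeas ν) hanti ⟨0, measure_ne_top ν _⟩)
    (tendsto_measure_iInter_atTop (hmeas μ) hanti ⟨0, measure_ne_top μ _⟩)
    fun n => h _ (hr_mem n)

theorem measure_le_of_forall_Ioi_inter_le (hB : MeasurableSet B) {t : ℝ}
    (h : ∀ r, t ≤ r → ν (Ioi r ∩ B) ≤ μ (Ioi r ∩ B)) (hA : A ⊆ Ioi t ∩ B)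
    (hA_up : ∀ x ∈ A, ∀ y ∈ B, x ≤ y → y ∈ A) : ν A ≤ μ A := by
  rcases A.eq_empty_or_nonempty with rfl | hne
  · simp
  have hbdd : BddBelow A := ⟨t, fun x hx => (hA hx).1.le⟩
  set c := sInf A
  have htc : t ≤ c := le_csInf hne fun x hx => (hA hx).1.le
  have hIoi : Ioi c ∩ B ⊆ A := fun y ⟨hcy, hyB⟩ => by
    obtain ⟨x, hxA, hxy⟩ := exists_lt_of_csInf_lt hne hcy
    exact hA_up x hxA y hyB hxy.le
  by_cases hcA : c ∈ A
  · have hAeq : A = Ici c ∩ B := Subset.antisymm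
      (fun x hx => ⟨csInf_le hbdd hx, (hA hx).2⟩)
      (fun y ⟨hcy, hyB⟩ => hA_up c hcA y hyB hcy)
    rw [hAeq]
    exact measure_Ici_inter_le_of_forall_Ioo hB (hA hcA).1 fun r hr => h r hr.1.le
  · have hAeq : A = Ioi c ∩ B := Subset.antisymm
      (fun x hx => ⟨(csInf_le hbdd hx).lt_of_ne (hx.ne_of_notMem hcA).symm, (hA hx).2⟩) hIoi
    rw [hAeq]
    exact h c htc

end UpwardClosed

theorem MeasureTheory.SignedMeasure.negPart_le_posPart_of_nonneg {α : Type*}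
    [MeasurableSpace α] (W : SignedMeasure α) {s : Set α} (hs : MeasurableSet s)
    (hWs : 0 ≤ W s) : W.toJordanDecomposition.negPart s ≤ W.toJordanDecomposition.posPart s := by
  rw [W.apply_eq_posPart_real_sub_negPart_real hs, sub_nonneg] at hWs
  exact (ENNReal.toReal_le_toReal (measure_ne_top _ _) (measure_ne_top _ _)).mp hWs

theorem EReal.setOf_coe_lt_and_coe_lt (t : ℝ) (b : EReal) :
    {x : ℝ | (t : EReal) < x ∧ (x : EReal) < b} = Ioi t ∩ {x : ℝ | (x : EReal) < b} := by
  ext x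
  simp [EReal.coe_lt_coe_iff]

theorem barlow_proschan_integral_nonneg_general
    (a b : EReal)
    (W : MeasureTheory.SignedMeasure ℝ) (u : ℝ → ℝ)
    (hu_nonneg : ∀ x : ℝ, a < (x : EReal) → (x : EReal) < b → 0 ≤ u x)
    (hu_mono : ∀ x y : ℝ, a < (x : EReal) → (y : EReal) < b → x ≤ y → u x ≤ u y)
    (hu_int : IntegrableOn u {x : ℝ | a < (x : EReal) ∧ (x : EReal) < b} W.totalVariation)
    (hW : ∀ t : ℝ, a < (t : EReal) → (t : EReal) < b →
      0 ≤ W {x : ℝ | (t : EReal) < (x : EReal) ∧ (x : EReal) < b}) :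
    ∀ t : ℝ, a < (t : EReal) → (t : EReal) < b →
      0 ≤ (∫ x in {x : ℝ | (t : EReal) < (x : EReal) ∧ (x : EReal) < b}, u x
              ∂W.toJordanDecomposition.posPart) -
          ∫ x in {x : ℝ | (t : EReal) < (x : EReal) ∧ (x : EReal) < b}, u x
              ∂W.toJordanDecomposition.negPart := by
  intro t hat _
  set B := {x : ℝ | (x : EReal) < b}
  have hB : MeasurableSet B := measurable_coe_real_ereal measurableSet_Iio
  have hS : MeasurableSet (Ioi t ∩ B) := measurableSet_Ioi.inter hB
  have ha : ∀ x, t ≤ x → a < (x : EReal) := fun x hx => hat.trans_le (EReal.coe_le_coe_iff.2 hx)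
  have hint : IntegrableOn u (Ioi t ∩ B) W.totalVariation :=
    hu_int.mono_set fun x hx => ⟨ha x hx.1.le, hx.2⟩
  have hnonneg : ∀ μ : Measure ℝ, 0 ≤ᵐ[μ.restrict (Ioi t ∩ B)] u :=
    fun μ => ae_restrict_of_forall_mem hS fun x hx => hu_nonneg x (ha x hx.1.le) hx.2
  have hW' : ∀ r, t ≤ r → W.toJordanDecomposition.negPart (Ioi r ∩ B)
      ≤ W.toJordanDecomposition.posPart (Ioi r ∩ B) := by
    intro r htr
    by_cases hrb : (r : EReal) < b
    · have hWr := hW r (ha r htr) hrb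
      rw [EReal.setOf_coe_lt_and_coe_lt] at hWr
      exact W.negPart_le_posPart_of_nonneg (measurableSet_Ioi.inter hB) hWr
    · have hempty : Ioi r ∩ B = ∅ := eq_empty_of_forall_notMem fun x hx =>
        hrb ((EReal.coe_lt_coe_iff.2 hx.1).trans hx.2)
      simp [hempty]
  rw [EReal.setOf_coe_lt_and_coe_lt, sub_nonneg]
  refine integral_le_integral_of_measure_lt_le
    (hint.mono_measure (Measure.le_add_right le_rfl))
    (hint.mono_measure (Measure.le_add_left le_rfl)).aestronglyMeasurable
    (hnonneg _) (hnonneg _) fun s => ?_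
  rw [Measure.restrict_apply' hS, Measure.restrict_apply' hS]
  refine measure_le_of_forall_Ioi_inter_le hB hW' inter_subset_right ?_
  rintro x ⟨hsx, hxt, -⟩ y hyB hxy
  exact ⟨hsx.trans_le (hu_mono x y (ha x hxt.le) hyB hxy), hxt.trans_le hxy, hyB⟩

/-- **Lemma 1 (Barlow–Proschan).**  Let `a < b` (extended reals), let `W` be a finite
signed measure on the interval `(a,b)` and let `u` be a nonnegative increasing function
on `(a,b)`, integrable with respect to the total variation of `W`.  If `W((t,b)) ≥ 0` for
all `t ∈ (a,b)`, then `∫_{(t,b)} u dW ≥ 0` for all `t ∈ (a,b)` (the integral with respect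
to `W` being the difference of the integrals with respect to the positive and negative
parts of its Jordan decomposition). -/
theorem barlow_proschan_integral_nonneg
    (a b : EReal) (hab : a < b)
    (W : MeasureTheory.SignedMeasure ℝ) (u : ℝ → ℝ)
    (hu_nonneg : ∀ x : ℝ, a < (x : EReal) → (x : EReal) < b → 0 ≤ u x)
    (hu_mono : ∀ x y : ℝ, a < (x : EReal) → (y : EReal) < b → x ≤ y → u x ≤ u y)
    (hu_meas : Measurable u)
    (hu_int : IntegrableOn u {x : ℝ | a < (x : EReal) ∧ (x : EReal) < b} W.totalVariation)
    (hW : ∀ t : ℝ, a < (t : EReal) → (t : EReal) < b →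
      0 ≤ W {x : ℝ | (t : EReal) < (x : EReal) ∧ (x : EReal) < b}) :
    ∀ t : ℝ, a < (t : EReal) → (t : EReal) < b →
      0 ≤ (∫ x in {x : ℝ | (t : EReal) < (x : EReal) ∧ (x : EReal) < b}, u x
              ∂W.toJordanDecomposition.posPart) -
          ∫ x in {x : ℝ | (t : EReal) < (x : EReal) ∧ (x : EReal) < b}, u x
              ∂W.toJordanDecomposition.negPart :=
  barlow_proschan_integral_nonneg_general a b W u hu_nonneg hu_mono hu_int hW
end

section
/- Let X and Y be nonnegative continuous random variables with finite means and strictly increasing distribution functions F and G. If X ≤_ttt Y, then X_h ≤_ttt Y_h for every starshaped distortion function h. -/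
open MeasureTheory Set Filter

/-- The (generalized inverse) quantile function of a distribution function `F`. -/
noncomputable def quantile (F : ℝ → ℝ) (p : ℝ) : ℝ := sInf {x : ℝ | p ≤ F x}

/-- `F` is the distribution function of a nonnegative random variable
(with total mass one). -/
def IsNonnegCDF (F : ℝ → ℝ) : Prop :=
  Monotone F ∧ (∀ x : ℝ, x ≤ 0 → F x = 0) ∧ Tendsto F atTop (nhds 1)

/-- A distortion function: a left-continuous increasing map of `[0,1]` onto itself
with `h 0 = 0` and `h 1 = 1`. -/
def IsDistortionFn (h : ℝ → ℝ) : Prop :=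
  MonotoneOn h (Icc 0 1) ∧ (∀ p ∈ Ioc (0:ℝ) 1, ContinuousWithinAt h (Iio p) p) ∧
    h 0 = 0 ∧ h 1 = 1 ∧ MapsTo h (Icc 0 1) (Icc 0 1)

/-- `h` is starshaped: `h p / p` is increasing on `(0,1]`. -/
def Starshaped (h : ℝ → ℝ) : Prop := MonotoneOn (fun p => h p / p) (Ioc 0 1)

/-- `h` is antistarshaped: `h p / p` is decreasing on `(0,1]`. -/
def Antistarshaped (h : ℝ → ℝ) : Prop := AntitoneOn (fun p => h p / p) (Ioc 0 1)

/-- Distribution function of the distorted random variable `X_h`,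
whose survival function is `h ∘ (1 - F)`. -/
noncomputable def distortedCDF (h F : ℝ → ℝ) : ℝ → ℝ := fun x => 1 - h (1 - F x)

/-- `∫_0^{F⁻¹(p)} (1 - F(x)) dx`. -/
noncomputable def tttIntegral (F : ℝ → ℝ) (p : ℝ) : ℝ :=
  ∫ x in (0:ℝ)..(quantile F p), (1 - F x)

/-- `∫_{F⁻¹(p)}^∞ (1 - F(x)) dx`. -/
noncomputable def ewIntegral (F : ℝ → ℝ) (p : ℝ) : ℝ :=
  ∫ x in Ioi (quantile F p), (1 - F x)

/-- `∫_0^{F⁻¹(p)} F(x) dx`. -/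
noncomputable def mitIntegral (F : ℝ → ℝ) (p : ℝ) : ℝ :=
  ∫ x in (0:ℝ)..(quantile F p), F x

/-- Total time on test transform order. -/
def TTT_le (F G : ℝ → ℝ) : Prop := ∀ p ∈ Ioo (0:ℝ) 1, tttIntegral F p ≤ tttIntegral G p

/-- Excess wealth order. -/
def EW_le (F G : ℝ → ℝ) : Prop := ∀ p ∈ Ioo (0:ℝ) 1, ewIntegral F p ≤ ewIntegral G p

/-- Decreasing mean residual life order. -/
def DMRL_le (F G : ℝ → ℝ) : Prop :=
  MonotoneOn (fun p => ewIntegral G p / ewIntegral F p) (Ioo (0:ℝ) 1)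

/-- Quantile mean inactivity time order. -/
def QMIT_le (F G : ℝ → ℝ) : Prop :=
  AntitoneOn (fun p => mitIntegral F p / mitIntegral G p) (Ioo (0:ℝ) 1)

/-!
Write the distorted survival function as `h (1 - F x) = (1 - F x) * k (1 - F x)`, where
`k t = h t / t` is increasing because `h` is starshaped, so `v ↦ k (1 - v)` is decreasing.
Pushing `(1 - F x) dx` on `(0, F⁻¹ w]` forward along `F` gives a measure on `[0, w]` whose
distribution function is `p ↦ ∫_0^{F⁻¹ (min p w)} (1 - F)`; the ttt order says exactly that
these measures for `F` and `G` are ordered on initial intervals, and by the layer-cake formula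
the integrals of a decreasing function against them are then ordered as well. Finally, the
`p`-quantile of the distorted distribution is `F⁻¹ w` for a level `w` that depends only on
`h` and `p`, so both sides of the distorted ttt order are integrals of this kind with the same `w`.
-/

theorem measure_le_of_isLowerSet {α : Type*} [ConditionallyCompleteLinearOrder α]
    [MeasurableSpace α] [(atTop : Filter α).IsCountablyGenerated] {μ ν : Measure α}
    (hμν : ∀ m, μ (Iic m) ≤ ν (Iio m)) {S : Set α} (hS : IsLowerSet S) : μ S ≤ ν S := by
  rcases S.eq_empty_or_nonempty with rfl | hne
  · simp
  have : Nonempty α := hne.to_subtype.map Subtype.val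
  by_cases hbdd : BddAbove S
  · have hIio : Iio (sSup S) ⊆ S := fun y hy =>
      let ⟨z, hzS, hyz⟩ := exists_lt_of_lt_csSup hne hy
      hS hyz.le hzS
    calc μ S ≤ μ (Iic (sSup S)) := measure_mono fun y hy => le_csSup hbdd hy
      _ ≤ ν (Iio (sSup S)) := hμν _
      _ ≤ ν S := measure_mono hIio
  · have hS_univ : S = univ := eq_univ_of_forall fun y => by
      obtain ⟨z, hzS, hyz⟩ := not_bddAbove_iff.1 hbdd y
      exact hS hyz.le hzS
    rw [hS_univ]
    exact le_of_tendsto_of_tendsto' (tendsto_measure_Iic_atTop μ) (tendsto_measure_Iic_atTop ν)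
      fun m => (hμν m).trans (measure_mono Iio_subset_Iic_self)

theorem lintegral_ofReal_le_of_antitone {μ ν : Measure ℝ} (hμν : ∀ m, μ (Iic m) ≤ ν (Iio m))
    {φ : ℝ → ℝ} (hφ : Antitone φ) :
    ∫⁻ v, ENNReal.ofReal (φ v) ∂μ ≤ ∫⁻ v, ENNReal.ofReal (φ v) ∂ν := by
  have hφ₀ : Antitone fun v => max (φ v) 0 := fun a b hab => max_le_max (hφ hab) le_rfl
  have hclip : ∀ v, ENNReal.ofReal (φ v) = ENNReal.ofReal (max (φ v) 0) := by simp
  simp only [hclip]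
  have hnn : ∀ v, (0 : ℝ) ≤ max (φ v) 0 := fun _ => le_max_right _ _
  rw [lintegral_eq_lintegral_meas_lt μ (ae_of_all _ hnn) hφ₀.measurable.aemeasurable,
    lintegral_eq_lintegral_meas_lt ν (ae_of_all _ hnn) hφ₀.measurable.aemeasurable]
  exact lintegral_mono fun t =>
    measure_le_of_isLowerSet hμν fun a b hab ha => ha.trans_le (hφ₀ hab)

section NonnegCDF

variable {F : ℝ → ℝ}

theorem IsNonnegCDF.nonneg (hF : IsNonnegCDF F) (x : ℝ) : 0 ≤ F x :=
  hF.2.1 (min x 0) (min_le_right x 0) ▸ hF.1 (min_le_left x 0)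

theorem IsNonnegCDF.le_one (hF : IsNonnegCDF F) (x : ℝ) : F x ≤ 1 :=
  hF.1.ge_of_tendsto hF.2.2 x

theorem IsNonnegCDF.lt_one (hF : IsNonnegCDF F) (hFstrict : StrictMonoOn F (Ici 0)) (x : ℝ) :
    F x < 1 :=
  calc F x ≤ F (max x 0) := hF.1 (le_max_left x 0)
    _ < F (max x 0 + 1) :=
      hFstrict (le_max_right x 0) (by simp [add_nonneg]) (lt_add_one _)
    _ ≤ 1 := hF.le_one _

theorem IsNonnegCDF.apply_lt_apply_of_pos (hF : IsNonnegCDF F) (hFstrict : StrictMonoOn F (Ici 0))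
    {x y : ℝ} (hy : 0 < y) (hxy : x < y) : F x < F y := by
  rcases le_or_gt 0 x with hx | hx
  · exact hFstrict hx hy.le hxy
  · rw [hF.2.1 x hx.le, ← hF.2.1 0 le_rfl]
    exact hFstrict self_mem_Ici hy.le hy

theorem IsNonnegCDF.exists_eq (hF : IsNonnegCDF F) (hFcont : Continuous F) {v : ℝ}
    (hv : v ∈ Ioo (0:ℝ) 1) : ∃ x, 0 < x ∧ F x = v := by
  obtain ⟨b, hb⟩ := (hF.2.2.eventually (eventually_gt_nhds hv.2)).exists
  have hb0 : 0 < b := not_le.1 fun hb0 => by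
    rw [hF.2.1 b hb0] at hb
    exact hv.1.not_gt hb
  have hv0 : v ∈ Ioo (F 0) (F b) := ⟨(hF.2.1 0 le_rfl).symm ▸ hv.1, hb⟩
  obtain ⟨x, hx, hFx⟩ := intermediate_value_Ioo hb0.le hFcont.continuousOn hv0
  exact ⟨x, hx.1, hFx⟩

theorem quantile_cdf (hF : IsNonnegCDF F) (hFstrict : StrictMonoOn F (Ici 0)) {x : ℝ}
    (hx : 0 < x) : quantile F (F x) = x := by
  have hsub : {y | F x ≤ F y} = Ici x := by
    ext y
    exact ⟨fun h => not_lt.1 fun hyx => (hF.apply_lt_apply_of_pos hFstrict hx hyx).not_ge h,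
      fun h => hF.1 h⟩
  rw [quantile, hsub, csInf_Ici]

theorem quantile_pos (hF : IsNonnegCDF F) (hFcont : Continuous F)
    (hFstrict : StrictMonoOn F (Ici 0)) {v : ℝ} (hv : v ∈ Ioo (0:ℝ) 1) : 0 < quantile F v := by
  obtain ⟨q, hq, rfl⟩ := hF.exists_eq hFcont hv
  rwa [quantile_cdf hF hFstrict hq]

theorem cdf_le_iff_le_quantile (hF : IsNonnegCDF F) (hFcont : Continuous F)
    (hFstrict : StrictMonoOn F (Ici 0)) {v : ℝ} (hv : v ∈ Ioo (0:ℝ) 1) {x : ℝ} :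
    F x ≤ v ↔ x ≤ quantile F v := by
  obtain ⟨q, hq, rfl⟩ := hF.exists_eq hFcont hv
  rw [quantile_cdf hF hFstrict hq]
  exact ⟨fun h => not_lt.1 fun hqx =>
    (hF.apply_lt_apply_of_pos hFstrict (hq.trans hqx) hqx).not_ge h, fun h => hF.1 h⟩

theorem cdf_lt_iff_lt_quantile (hF : IsNonnegCDF F) (hFcont : Continuous F)
    (hFstrict : StrictMonoOn F (Ici 0)) {v : ℝ} (hv : v ∈ Ioo (0:ℝ) 1) {x : ℝ} :
    F x < v ↔ x < quantile F v := by
  obtain ⟨q, hq, rfl⟩ := hF.exists_eq hFcont hv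
  rw [quantile_cdf hF hFstrict hq]
  exact ⟨fun h => not_le.1 fun hqx => (hF.1 hqx).not_gt h, hF.apply_lt_apply_of_pos hFstrict hq⟩

theorem quantile_one (hF : IsNonnegCDF F) (hFstrict : StrictMonoOn F (Ici 0)) :
    quantile F 1 = 0 := by
  have hempty : {x | (1:ℝ) ≤ F x} = ∅ :=
    eq_empty_of_forall_notMem fun x hx => (hF.lt_one hFstrict x).not_ge hx
  rw [quantile, hempty, Real.sInf_empty]

end NonnegCDF

section Distortion

variable {h : ℝ → ℝ}

theorem IsDistortionFn.exists_le_iff_le (hdist : IsDistortionFn h) {c : ℝ}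
    (hc : c ∈ Ico (0:ℝ) 1) : ∃ s ∈ Ico (0:ℝ) 1, ∀ t ∈ Icc (0:ℝ) 1, h t ≤ c ↔ t ≤ s := by
  obtain ⟨hmono, hleft, h0, h1, -⟩ := hdist
  set T := {t ∈ Icc (0:ℝ) 1 | h t ≤ c}
  have h0T : 0 ∈ T := ⟨left_mem_Icc.2 zero_le_one, by rw [h0]; exact hc.1⟩
  have hbdd : BddAbove T := ⟨1, fun t ht => ht.1.2⟩
  have hs0 : 0 ≤ sSup T := le_csSup hbdd h0T
  have hs1 : sSup T ≤ 1 := csSup_le ⟨0, h0T⟩ fun t ht => ht.1.2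
  -- `h` is left-continuous, so the supremum of the sublevel set is attained
  have hsT : h (sSup T) ≤ c := by
    rcases hs0.eq_or_lt with hs | hs
    · rw [← hs, h0]
      exact hc.1
    refine le_of_tendsto (hleft _ ⟨hs, hs1⟩) ?_
    filter_upwards [Ioo_mem_nhdsLT hs] with t ht
    obtain ⟨r, hrT, htr⟩ := exists_lt_of_lt_csSup ⟨0, h0T⟩ ht.2
    exact (hmono ⟨ht.1.le, ht.2.le.trans hs1⟩ hrT.1 htr.le).trans hrT.2
  refine ⟨sSup T, ⟨hs0, hs1.lt_of_ne fun hs => ?_⟩, fun t ht =>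
    ⟨fun htc => le_csSup hbdd ⟨ht, htc⟩, fun hts => (hmono ht ⟨hs0, hs1⟩ hts).trans hsT⟩⟩
  rw [hs, h1] at hsT
  exact hc.2.not_ge hsT

theorem Starshaped.exists_monotone_mul (hstar : Starshaped h) (hdist : IsDistortionFn h) :
    ∃ g : ℝ → ℝ, Monotone g ∧ ∀ t ∈ Ioc (0:ℝ) 1, h t = t * g t := by
  have hbdd_below : BddBelow ((fun t => h t / t) '' Ioc 0 1) := by
    refine ⟨0, ?_⟩
    rintro _ ⟨t, ht, rfl⟩
    exact div_nonneg (hdist.2.2.2.2 (Ioc_subset_Icc_self ht)).1 ht.1.le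
  have hbdd_above : BddAbove ((fun t => h t / t) '' Ioc 0 1) := by
    refine ⟨1, ?_⟩
    rintro _ ⟨t, ht, rfl⟩
    simpa [hdist.2.2.2.1] using hstar ht (right_mem_Ioc.2 one_pos) ht.2
  obtain ⟨g, hg, hEq⟩ := hstar.exists_monotone_extension hbdd_below hbdd_above
  exact ⟨g, hg, fun t ht => by rw [← hEq ht, mul_div_cancel₀ _ ht.1.ne']⟩

variable {F : ℝ → ℝ}

theorem IsNonnegCDF.antitone_distortion_survival (hF : IsNonnegCDF F) (hdist : IsDistortionFn h) :
    Antitone fun x => h (1 - F x) := fun x y hxy =>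
  hdist.1 ⟨sub_nonneg.2 (hF.le_one y), by linarith [hF.nonneg y]⟩
    ⟨sub_nonneg.2 (hF.le_one x), by linarith [hF.nonneg x]⟩ (by linarith [hF.1 hxy])

theorem quantile_distortedCDF (hF : IsNonnegCDF F) {p s : ℝ}
    (hs : ∀ t ∈ Icc (0:ℝ) 1, h t ≤ 1 - p ↔ t ≤ s) :
    quantile (distortedCDF h F) p = quantile F (1 - s) := by
  have hsets : {x | p ≤ distortedCDF h F x} = {x | 1 - s ≤ F x} := by
    ext x
    have hx := hs (1 - F x) ⟨sub_nonneg.2 (hF.le_one x), by linarith [hF.nonneg x]⟩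
    change p ≤ 1 - h (1 - F x) ↔ 1 - s ≤ F x
    rw [le_sub_comm, hx, sub_le_comm]
  rw [quantile, hsets, quantile]

end Distortion

section TTTMeasure

variable {F G : ℝ → ℝ}

/-- The Stieltjes measure of `p ↦ tttIntegral F (min p w)` (for `p > 0`). -/
noncomputable def tttMeasure (F : ℝ → ℝ) (w : ℝ) : Measure ℝ :=
  ((volume.restrict (Ioc 0 (quantile F w))).withDensity fun x => ENNReal.ofReal (1 - F x)).map F

theorem tttMeasure_apply (hFmeas : Measurable F) (w : ℝ) {s : Set ℝ} (hs : MeasurableSet s) :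
    tttMeasure F w s = ∫⁻ x in F ⁻¹' s ∩ Ioc 0 (quantile F w), ENNReal.ofReal (1 - F x) := by
  rw [tttMeasure, Measure.map_apply hFmeas hs, withDensity_apply _ (hFmeas hs),
    Measure.restrict_restrict (hFmeas hs)]

theorem lintegral_tttMeasure (hFmeas : Measurable F) (w : ℝ) {ψ : ℝ → ENNReal}
    (hψ : Measurable ψ) :
    ∫⁻ v, ψ v ∂tttMeasure F w =
      ∫⁻ x in Ioc 0 (quantile F w), ENNReal.ofReal (1 - F x) * ψ (F x) := by
  rw [tttMeasure, lintegral_map hψ hFmeas, lintegral_withDensity_eq_lintegral_mul _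
    (hFmeas.const_sub 1).ennreal_ofReal (by fun_prop : Measurable fun x => ψ (F x))]
  rfl

theorem lintegral_Ioc_quantile (hF : IsNonnegCDF F) (hFcont : Continuous F)
    (hFstrict : StrictMonoOn F (Ici 0)) {v : ℝ} (hv : v ∈ Ioo (0:ℝ) 1) :
    ∫⁻ x in Ioc 0 (quantile F v), ENNReal.ofReal (1 - F x) = ENNReal.ofReal (tttIntegral F v) := by
  rw [tttIntegral, intervalIntegral.integral_of_le (quantile_pos hF hFcont hFstrict hv).le,
    ofReal_integral_eq_lintegral_ofReal (f := fun x => 1 - F x)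
      (continuous_const.sub hFcont).integrableOn_Ioc
      (ae_of_all _ fun x => sub_nonneg.2 (hF.le_one x))]

theorem tttMeasure_Iic_le_tttMeasure_Iio (hF : IsNonnegCDF F) (hG : IsNonnegCDF G)
    (hFcont : Continuous F) (hGcont : Continuous G)
    (hFstrict : StrictMonoOn F (Ici 0)) (hGstrict : StrictMonoOn G (Ici 0))
    (hle : TTT_le F G) {w : ℝ} (hw : w ∈ Ioo (0:ℝ) 1) (m : ℝ) :
    tttMeasure F w (Iic m) ≤ tttMeasure G w (Iio m) := by
  rw [tttMeasure_apply hFcont.measurable w measurableSet_Iic,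
    tttMeasure_apply hGcont.measurable w measurableSet_Iio]
  rcases le_or_gt m 0 with hm | hm
  · have hempty : F ⁻¹' Iic m ∩ Ioc 0 (quantile F w) = ∅ :=
      eq_empty_of_forall_notMem fun x ⟨hxm, hx0, _⟩ =>
        (hF.apply_lt_apply_of_pos hFstrict hx0 hx0).not_ge
          (hxm.trans (hm.trans_eq (hF.2.1 0 le_rfl).symm))
    simp [hempty]
  set m' := min m w
  have hm' : m' ∈ Ioo (0:ℝ) 1 := ⟨lt_min hm hw.1, (min_le_right _ _).trans_lt hw.2⟩
  calc ∫⁻ x in F ⁻¹' Iic m ∩ Ioc 0 (quantile F w), ENNReal.ofReal (1 - F x)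
      ≤ ∫⁻ x in Ioc 0 (quantile F m'), ENNReal.ofReal (1 - F x) :=
        lintegral_mono_set fun x ⟨hxm, hx0, hxw⟩ => ⟨hx0,
          (cdf_le_iff_le_quantile hF hFcont hFstrict hm').1
            (le_min hxm ((cdf_le_iff_le_quantile hF hFcont hFstrict hw).2 hxw))⟩
    _ = ENNReal.ofReal (tttIntegral F m') := lintegral_Ioc_quantile hF hFcont hFstrict hm'
    _ ≤ ENNReal.ofReal (tttIntegral G m') := ENNReal.ofReal_le_ofReal (hle m' hm')
    _ = ∫⁻ x in Ioo 0 (quantile G m'), ENNReal.ofReal (1 - G x) := by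
        rw [restrict_Ioo_eq_restrict_Ioc, lintegral_Ioc_quantile hG hGcont hGstrict hm']
    _ ≤ ∫⁻ x in G ⁻¹' Iio m ∩ Ioc 0 (quantile G w), ENNReal.ofReal (1 - G x) := by
        refine lintegral_mono_set fun x ⟨hx0, hxm⟩ => ?_
        have hGx := (cdf_lt_iff_lt_quantile hG hGcont hGstrict hm').2 hxm
        exact ⟨hGx.trans_le (min_le_left _ _), hx0,
          (cdf_le_iff_le_quantile hG hGcont hGstrict hw).1 (hGx.le.trans (min_le_right _ _))⟩

end TTTMeasure

section Distorted

variable {F G h : ℝ → ℝ}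

theorem ofReal_integral_distortion_survival_eq_lintegral (hF : IsNonnegCDF F)
    (hFcont : Continuous F) (hFstrict : StrictMonoOn F (Ici 0)) (hdist : IsDistortionFn h)
    {g : ℝ → ℝ} (hg : Measurable g) (hhg : ∀ t ∈ Ioc (0:ℝ) 1, h t = t * g t) {w : ℝ}
    (hw : w ∈ Ioo (0:ℝ) 1) :
    ENNReal.ofReal (∫ x in (0:ℝ)..quantile F w, h (1 - F x)) =
      ∫⁻ v, ENNReal.ofReal (g (1 - v)) ∂tttMeasure F w := by
  have hq := (quantile_pos hF hFcont hFstrict hw).le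
  rw [intervalIntegral.integral_of_le hq, ofReal_integral_eq_lintegral_ofReal
      ((hF.antitone_distortion_survival hdist).intervalIntegrable.1)
      (ae_of_all _ fun x => (hdist.2.2.2.2 ⟨sub_nonneg.2 (hF.le_one x),
        by linarith [hF.nonneg x]⟩).1),
    lintegral_tttMeasure hFcont.measurable w (by fun_prop)]
  refine lintegral_congr fun x => ?_
  rw [← ENNReal.ofReal_mul (sub_nonneg.2 (hF.le_one x)),
    ← hhg _ ⟨sub_pos.2 (hF.lt_one hFstrict x), by linarith [hF.nonneg x]⟩]

theorem integral_distortion_survival_le (hF : IsNonnegCDF F) (hG : IsNonnegCDF G)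
    (hFcont : Continuous F) (hGcont : Continuous G)
    (hFstrict : StrictMonoOn F (Ici 0)) (hGstrict : StrictMonoOn G (Ici 0))
    (hdist : IsDistortionFn h) (hstar : Starshaped h) (hle : TTT_le F G) {w : ℝ}
    (hw : w ∈ Ioo (0:ℝ) 1) :
    ∫ x in (0:ℝ)..quantile F w, h (1 - F x) ≤ ∫ x in (0:ℝ)..quantile G w, h (1 - G x) := by
  obtain ⟨g, hg, hhg⟩ := hstar.exists_monotone_mul hdist
  have hrhs : 0 ≤ ∫ x in (0:ℝ)..quantile G w, h (1 - G x) :=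
    intervalIntegral.integral_nonneg (quantile_pos hG hGcont hGstrict hw).le fun x _ =>
      (hdist.2.2.2.2 ⟨sub_nonneg.2 (hG.le_one x), by linarith [hG.nonneg x]⟩).1
  rw [← ENNReal.ofReal_le_ofReal_iff hrhs,
    ofReal_integral_distortion_survival_eq_lintegral hF hFcont hFstrict hdist hg.measurable hhg hw,
    ofReal_integral_distortion_survival_eq_lintegral hG hGcont hGstrict hdist hg.measurable hhg hw]
  exact lintegral_ofReal_le_of_antitone
    (tttMeasure_Iic_le_tttMeasure_Iio hF hG hFcont hGcont hFstrict hGstrict hle hw)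
    fun a b hab => hg (by linarith)

end Distorted

theorem ttt_preserved_by_starshaped_distortion_general
    (F G h : ℝ → ℝ)
    (hF : IsNonnegCDF F) (hG : IsNonnegCDF G)
    (hFcont : Continuous F) (hGcont : Continuous G)
    (hFstrict : StrictMonoOn F (Ici 0)) (hGstrict : StrictMonoOn G (Ici 0))
    (hdist : IsDistortionFn h) (hstar : Starshaped h)
    (hle : TTT_le F G) :
    TTT_le (distortedCDF h F) (distortedCDF h G) := by
  intro p hp
  obtain ⟨s, hs, hsub⟩ :=
    hdist.exists_le_iff_le (c := 1 - p) ⟨by linarith [hp.2], by linarith [hp.1]⟩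
  simp only [tttIntegral, quantile_distortedCDF hF hsub, quantile_distortedCDF hG hsub,
    distortedCDF, sub_sub_cancel]
  rcases hs.1.eq_or_lt with rfl | hs0
  · simp [quantile_one hF hFstrict, quantile_one hG hGstrict]
  exact integral_distortion_survival_le hF hG hFcont hGcont hFstrict hGstrict hdist hstar hle
    ⟨by linarith [hs.2], by linarith⟩

/-- **Theorem 2 (preservation of the ttt order).**
If `X ≤_ttt Y` (nonnegative continuous random variables with finite means and strictly
increasing distribution functions `F`, `G`), then `X_h ≤_ttt Y_h` for every starshaped
distortion function `h`. -/
theorem ttt_preserved_by_starshaped_distortion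
    (F G h : ℝ → ℝ)
    (hF : IsNonnegCDF F) (hG : IsNonnegCDF G)
    (hFcont : Continuous F) (hGcont : Continuous G)
    (hFstrict : StrictMonoOn F (Ici 0)) (hGstrict : StrictMonoOn G (Ici 0))
    (hFmean : IntegrableOn (fun x => 1 - F x) (Ioi 0) volume)
    (hGmean : IntegrableOn (fun x => 1 - G x) (Ioi 0) volume)
    (hdist : IsDistortionFn h) (hstar : Starshaped h)
    (hle : TTT_le F G) :
    TTT_le (distortedCDF h F) (distortedCDF h G) :=
  ttt_preserved_by_starshaped_distortion_general F G h hF hG hFcont hGcont hFstrict hGstrict hdist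
    hstar hle
end

section
/- Let X and Y be nonnegative absolutely continuous random variables with finite means and strictly increasing distribution functions F and G, and let h be an antistarshaped, strictly increasing, differentiable distortion function. If X ≤_dmrl Y, then X_h ≤_dmrl Y_h. -/
open MeasureTheory Set Filter

/-!
Everything is moved to the probability scale: `ν_W := ewMeasure W`, the image under `W` of
`(1 - W x) dx` on `(0, ∞)`, has mass `ewIntegral W u` on `(u, ∞)`, so the dmrl order says that
`ν_G (u, ∞) / ν_F (u, ∞)` increases in `u`. Substituting `v = W x`, the excess-wealth integral of
the distorted distribution at level `p = 1 - h (1 - u)` is `∫_{(u, ∞)} k dν_W` with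
`k v = h (1 - v) / (1 - v)`, which increases because `h` is antistarshaped; here `u` depends on `p`
but not on `W`. For `s ≤ t` the dmrl order gives `ν_F (t, ∞) • ν_G ≤ ν_G (t, ∞) • ν_F` on the
upper subintervals of `(s, t]` and the reverse inequality on those of `(t, ∞)`. By the layer-cake
formula both inequalities survive integration of the increasing `k`, and together they give the
same monotonicity for the weighted tails.
-/

open scoped ENNReal

instance MeasureTheory.Measure.smul.instNullSingletonClass {α : Type*} [MeasurableSpace α]
    {μ : Measure α} [NullSingletonClass μ] (c : ℝ≥0∞) : NullSingletonClass (c • μ) :=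
  ⟨fun x => by simp⟩

section StochasticOrder

variable {μ ν : Measure ℝ} {S : Set ℝ}

theorem aemeasurable_of_monotoneOn_of_measure_compl_eq_zero {k : ℝ → ℝ} (hS : MeasurableSet S)
    (hμS : μ Sᶜ = 0) (hk : MonotoneOn k S) : AEMeasurable k μ := by
  rw [← Measure.restrict_eq_self_of_ae_mem (mem_ae_iff.mpr hμS)]
  exact aemeasurable_restrict_of_monotoneOn hS hk

theorem measure_le_of_forall_measure_Ioi_le [NullSingletonClass μ] (hμS : μ Sᶜ = 0)
    (hνS : ν Sᶜ = 0) (hμν : ∀ c, μ (Ioi c) ≤ ν (Ioi c)) {V : Set ℝ} (hVS : V ⊆ S)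
    (hV : ∀ x ∈ V, ∀ y ∈ S, x ≤ y → y ∈ V) : μ V ≤ ν V := by
  rcases V.eq_empty_or_nonempty with rfl | hne
  · simp
  by_cases hbdd : BddBelow V
  · have hup : S ∩ Ioi (sInf V) ⊆ V := fun y ⟨hyS, hy⟩ =>
      let ⟨x, hxV, hxy⟩ := exists_lt_of_csInf_lt hne hy
      hV x hxV y hyS hxy.le
    calc μ V ≤ μ (Ici (sInf V)) := measure_mono fun x hx => csInf_le hbdd hx
      _ = μ (Ioi (sInf V)) := measure_congr Ioi_ae_eq_Ici.symm
      _ ≤ ν (Ioi (sInf V)) := hμν _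
      _ = ν (S ∩ Ioi (sInf V)) := by rw [inter_comm, measure_inter_conull hνS]
      _ ≤ ν V := measure_mono hup
  · have hVeq : V = S := by
      refine hVS.antisymm fun y hyS => ?_
      obtain ⟨x, hxV, hxy⟩ := not_bddBelow_iff.mp hbdd y
      exact hV x hxV y hyS hxy.le
    have hlim : μ univ ≤ ν univ := by
      refine le_of_tendsto_of_tendsto' (tendsto_measure_Ici_atBot μ) (tendsto_measure_Ici_atBot ν)
        fun c => ?_
      calc μ (Ici c) = μ (Ioi c) := measure_congr Ioi_ae_eq_Ici.symm
        _ ≤ ν (Ioi c) := hμν c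
        _ ≤ ν (Ici c) := measure_mono Ioi_subset_Ici_self
    rwa [hVeq, ← univ_inter S, measure_inter_conull hμS, measure_inter_conull hνS]

theorem lintegral_le_of_forall_measure_Ioi_le [NullSingletonClass μ] (hS : MeasurableSet S)
    (hμS : μ Sᶜ = 0) (hνS : ν Sᶜ = 0) (hμν : ∀ c, μ (Ioi c) ≤ ν (Ioi c)) {k : ℝ → ℝ}
    (hk : MonotoneOn k S) (hk0 : ∀ x ∈ S, 0 ≤ k x) :
    ∫⁻ x, ENNReal.ofReal (k x) ∂μ ≤ ∫⁻ x, ENNReal.ofReal (k x) ∂ν := by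
  have hk0' : ∀ ρ : Measure ℝ, ρ Sᶜ = 0 → 0 ≤ᵐ[ρ] k := fun ρ hρ =>
    Filter.mem_of_superset (mem_ae_iff.mpr hρ) hk0
  rw [lintegral_eq_lintegral_meas_lt μ (hk0' μ hμS)
      (aemeasurable_of_monotoneOn_of_measure_compl_eq_zero hS hμS hk),
    lintegral_eq_lintegral_meas_lt ν (hk0' ν hνS)
      (aemeasurable_of_monotoneOn_of_measure_compl_eq_zero hS hνS hk)]
  refine lintegral_mono fun r => ?_
  rw [← measure_inter_conull hμS, ← measure_inter_conull hνS]
  exact measure_le_of_forall_measure_Ioi_le hμS hνS hμν inter_subset_right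
    fun x ⟨hx, hxS⟩ y hyS hxy => ⟨lt_of_lt_of_le hx (hk hxS hyS hxy), hyS⟩

theorem measure_Ioi_eq_Ioc_add_Ioi (ρ : Measure ℝ) {u t : ℝ} (hut : u ≤ t) :
    ρ (Ioi u) = ρ (Ioc u t) + ρ (Ioi t) := by
  rw [← measure_union (Ioc_disjoint_Ioi le_rfl) measurableSet_Ioi, Ioc_union_Ioi_eq_Ioi hut]

theorem smul_restrict_apply_eq_zero {ρ : Measure ℝ} (c : ℝ≥0∞) (A : Set ℝ) {B : Set ℝ}
    (hB : ρ B = 0) : (c • ρ.restrict A) B = 0 := by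
  rw [Measure.smul_apply, smul_eq_mul, le_zero_iff.mp ((Measure.restrict_apply_le _ _).trans hB.le),
    mul_zero]

theorem mul_lintegral_Ioc_le_of_measure_Ioi_mul_le [IsFiniteMeasure μ] [IsFiniteMeasure ν]
    [NullSingletonClass ν] (hS : MeasurableSet S) (hμS : μ Sᶜ = 0) (hνS : ν Sᶜ = 0) {k : ℝ → ℝ}
    (hk : MonotoneOn k S) (hk0 : ∀ x ∈ S, 0 ≤ k x) {s t : ℝ}
    (hratio : ∀ u, s ≤ u → u ≤ t → ν (Ioi u) * μ (Ioi t) ≤ ν (Ioi t) * μ (Ioi u)) :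
    μ (Ioi t) * ∫⁻ x in Ioc s t, ENNReal.ofReal (k x) ∂ν ≤
      ν (Ioi t) * ∫⁻ x in Ioc s t, ENNReal.ofReal (k x) ∂μ := by
  set a := μ (Ioi t)
  set b := ν (Ioi t)
  have hcmp : ∀ c, (a • ν.restrict (Ioc s t)) (Ioi c) ≤ (b • μ.restrict (Ioc s t)) (Ioi c) := by
    intro c
    simp only [Measure.smul_apply, smul_eq_mul, Measure.restrict_apply measurableSet_Ioi,
      inter_comm (Ioi c), Ioc_inter_Ioi]
    rcases le_or_gt t (s ⊔ c) with hct | hct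
    · simp [Ioc_eq_empty_of_le hct]
    have h := hratio (s ⊔ c) le_sup_left hct.le
    rw [measure_Ioi_eq_Ioc_add_Ioi ν hct.le, measure_Ioi_eq_Ioc_add_Ioi μ hct.le] at h
    refine (ENNReal.add_le_add_iff_right (by finiteness : b * a ≠ ∞)).mp ?_
    calc a * ν (Ioc (s ⊔ c) t) + b * a = (ν (Ioc (s ⊔ c) t) + b) * a := by ring
      _ ≤ b * (μ (Ioc (s ⊔ c) t) + a) := h
      _ = b * μ (Ioc (s ⊔ c) t) + b * a := by ring
  simpa only [lintegral_smul_measure, smul_eq_mul] using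
    lintegral_le_of_forall_measure_Ioi_le hS (smul_restrict_apply_eq_zero _ _ hνS)
      (smul_restrict_apply_eq_zero _ _ hμS) hcmp hk hk0

theorem mul_lintegral_Ioi_le_of_measure_Ioi_mul_le [NullSingletonClass μ] (hS : MeasurableSet S)
    (hμS : μ Sᶜ = 0) (hνS : ν Sᶜ = 0) {k : ℝ → ℝ} (hk : MonotoneOn k S)
    (hk0 : ∀ x ∈ S, 0 ≤ k x) {t : ℝ}
    (hratio : ∀ v, t ≤ v → ν (Ioi t) * μ (Ioi v) ≤ ν (Ioi v) * μ (Ioi t)) :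
    ν (Ioi t) * ∫⁻ x in Ioi t, ENNReal.ofReal (k x) ∂μ ≤
      μ (Ioi t) * ∫⁻ x in Ioi t, ENNReal.ofReal (k x) ∂ν := by
  have hcmp : ∀ c, (ν (Ioi t) • μ.restrict (Ioi t)) (Ioi c) ≤
      (μ (Ioi t) • ν.restrict (Ioi t)) (Ioi c) := fun c => by
    simp only [Measure.smul_apply, smul_eq_mul, Measure.restrict_apply measurableSet_Ioi,
      Ioi_inter_Ioi]
    exact (hratio _ le_sup_right).trans_eq (mul_comm _ _)
  simpa only [lintegral_smul_measure, smul_eq_mul] using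
    lintegral_le_of_forall_measure_Ioi_le hS (smul_restrict_apply_eq_zero _ _ hμS)
      (smul_restrict_apply_eq_zero _ _ hνS) hcmp hk hk0

theorem lintegral_Ioi_mul_le_of_measure_Ioi_mul_le [IsFiniteMeasure μ] [IsFiniteMeasure ν]
    [NullSingletonClass μ] [NullSingletonClass ν] (hS : MeasurableSet S) (hμS : μ Sᶜ = 0)
    (hνS : ν Sᶜ = 0) {k : ℝ → ℝ} (hk : MonotoneOn k S) (hk0 : ∀ x ∈ S, 0 ≤ k x) {s t : ℝ}
    (hst : s ≤ t)
    (hratio : ∀ u v, s ≤ u → u ≤ v → ν (Ioi u) * μ (Ioi v) ≤ ν (Ioi v) * μ (Ioi u))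
    (hμt : μ (Ioi t) ≠ 0) :
    (∫⁻ x in Ioi s, ENNReal.ofReal (k x) ∂ν) * ∫⁻ x in Ioi t, ENNReal.ofReal (k x) ∂μ ≤
      (∫⁻ x in Ioi t, ENNReal.ofReal (k x) ∂ν) * ∫⁻ x in Ioi s, ENNReal.ofReal (k x) ∂μ := by
  have hbody := mul_lintegral_Ioc_le_of_measure_Ioi_mul_le hS hμS hνS hk hk0
    fun u hu hut => hratio u t hu hut
  have htail := mul_lintegral_Ioi_le_of_measure_Ioi_mul_le hS hμS hνS hk hk0
    fun v htv => hratio t v hst htv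
  have hsplit : ∀ ρ : Measure ℝ, ∫⁻ x in Ioi s, ENNReal.ofReal (k x) ∂ρ =
      (∫⁻ x in Ioc s t, ENNReal.ofReal (k x) ∂ρ) + ∫⁻ x in Ioi t, ENNReal.ofReal (k x) ∂ρ :=
    fun ρ => by
      rw [← lintegral_union measurableSet_Ioi (Ioc_disjoint_Ioi le_rfl), Ioc_union_Ioi_eq_Ioi hst]
  rw [hsplit, hsplit]
  set a := μ (Ioi t)
  set Bν := ∫⁻ x in Ioc s t, ENNReal.ofReal (k x) ∂ν
  set Bμ := ∫⁻ x in Ioc s t, ENNReal.ofReal (k x) ∂μ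
  set Tν := ∫⁻ x in Ioi t, ENNReal.ofReal (k x) ∂ν
  set Tμ := ∫⁻ x in Ioi t, ENNReal.ofReal (k x) ∂μ
  refine (ENNReal.mul_le_mul_iff_right hμt (measure_ne_top μ _)).mp ?_
  calc a * ((Bν + Tν) * Tμ) = a * Bν * Tμ + a * (Tν * Tμ) := by ring
    _ ≤ ν (Ioi t) * Bμ * Tμ + a * (Tν * Tμ) := by gcongr
    _ = Bμ * (ν (Ioi t) * Tμ) + a * (Tν * Tμ) := by ring
    _ ≤ Bμ * (a * Tν) + a * (Tν * Tμ) := by gcongr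
    _ = a * (Tν * (Bμ + Tμ)) := by ring

end StochasticOrder

theorem ENNReal.toReal_div_le_toReal_div_iff {a b c d : ℝ≥0∞} (ha : a ≠ ∞) (hb : b ≠ 0)
    (hb' : b ≠ ∞) (hc : c ≠ ∞) (hd : d ≠ 0) (hd' : d ≠ ∞) :
    a.toReal / b.toReal ≤ c.toReal / d.toReal ↔ a * d ≤ c * b := by
  rw [div_le_div_iff₀ (ENNReal.toReal_pos hb hb') (ENNReal.toReal_pos hd hd'),
    ← ENNReal.toReal_mul, ← ENNReal.toReal_mul,
    ENNReal.toReal_le_toReal (ENNReal.mul_ne_top ha hd') (ENNReal.mul_ne_top hc hb')]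

section Quantile

variable {W : ℝ → ℝ}

theorem preimage_Ioi_apply_eq_Ioi (hW : Monotone W) (hWs : StrictMonoOn W (Ici 0)) {x : ℝ}
    (hx : 0 ≤ x) : W ⁻¹' Ioi (W x) = Ioi x := by
  ext y
  exact ⟨fun h => lt_of_not_ge fun hyx => (hW hyx).not_gt h,
    fun h => hWs hx (hx.trans h.le) h⟩

theorem quantile_apply_eq (hW : Monotone W) (hWs : StrictMonoOn W (Ici 0)) {x : ℝ} (hx : 0 < x) :
    quantile W (W x) = x := by
  have hlevel : {y | W x ≤ W y} = Ici x := by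
    ext y
    refine ⟨fun (h : W x ≤ W y) => mem_Ici.mpr (le_of_not_gt fun hyx => h.not_gt ?_),
      fun h => hW h⟩
    rcases le_or_gt 0 y with hy | hy
    · exact hWs hy hx.le hyx
    · exact (hW hy.le).trans_lt (hWs self_mem_Ici hx.le hx)
  rw [quantile, hlevel, csInf_Ici]

theorem exists_pos_apply_eq (hWc : Continuous W) (hW0 : ∀ x ≤ 0, W x = 0) {p x : ℝ} (hp : 0 < p)
    (hx : p ≤ W x) : ∃ y, 0 < y ∧ W y = p := by
  have hx0 : 0 ≤ x := le_of_not_gt fun h => by linarith [hW0 x h.le]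
  obtain ⟨y, -, hWy⟩ :=
    intermediate_value_Icc hx0 hWc.continuousOn ⟨(hW0 0 le_rfl).trans_le hp.le, hx⟩
  refine ⟨y, lt_of_not_ge fun hy => ?_, hWy⟩
  linarith [hW0 y hy]

end Quantile

noncomputable def distortionRatio (h : ℝ → ℝ) (v : ℝ) : ℝ := h (1 - v) / (1 - v)

namespace Antistarshaped

variable {h : ℝ → ℝ}

theorem monotoneOn_distortionRatio (hanti : Antistarshaped h) :
    MonotoneOn (distortionRatio h) (Ico 0 1) := fun u hu v hv huv =>
  hanti ⟨sub_pos.2 hv.2, by linarith [hv.1]⟩ ⟨sub_pos.2 hu.2, by linarith [hu.1]⟩ (by linarith)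

theorem one_le_distortionRatio (hanti : Antistarshaped h) (h1 : h 1 = 1) {v : ℝ}
    (hv : v ∈ Ico 0 1) : 1 ≤ distortionRatio h v := by
  simpa [distortionRatio, h1] using hanti ⟨sub_pos.2 hv.2, by linarith [hv.1]⟩ ⟨zero_lt_one, le_rfl⟩
    (by linarith [hv.1])

end Antistarshaped

theorem IsDistortionFn.continuousOn_Ioc {h : ℝ → ℝ} (hh : IsDistortionFn h)
    (hdiff : ∀ p ∈ Ioo (0:ℝ) 1, DifferentiableAt ℝ h p) : ContinuousOn h (Ioc 0 1) := by
  intro p hp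
  rcases hp.2.eq_or_lt with rfl | hp1
  · exact (continuousWithinAt_Iio_iff_Iic.mp (hh.2.1 1 hp)).mono Ioc_subset_Iic_self
  · exact (hdiff p ⟨hp.1, hp1⟩).continuousAt.continuousWithinAt

theorem distortedCDF_le_distortedCDF_iff {h W V : ℝ → ℝ} (hstrict : StrictMonoOn h (Icc 0 1))
    {x y : ℝ} (hx : W x ∈ Icc 0 1) (hy : V y ∈ Icc 0 1) :
    distortedCDF h W x ≤ distortedCDF h V y ↔ W x ≤ V y := by
  rw [distortedCDF, distortedCDF, sub_le_sub_iff_left,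
    hstrict.le_iff_le ⟨by linarith [hy.2], by linarith [hy.1]⟩
      ⟨by linarith [hx.2], by linarith [hx.1]⟩,
    sub_le_sub_iff_left]

theorem distortedCDF_eq_distortedCDF_iff {h W V : ℝ → ℝ} (hstrict : StrictMonoOn h (Icc 0 1))
    {x y : ℝ} (hx : W x ∈ Icc 0 1) (hy : V y ∈ Icc 0 1) :
    distortedCDF h W x = distortedCDF h V y ↔ W x = V y := by
  simp only [le_antisymm_iff, distortedCDF_le_distortedCDF_iff hstrict hx hy,
    distortedCDF_le_distortedCDF_iff hstrict hy hx]

namespace IsNonnegCDF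

variable {W h : ℝ → ℝ}

theorem nonneg_s5 (hW : IsNonnegCDF W) (x : ℝ) : 0 ≤ W x :=
  calc 0 = W (min x 0) := (hW.2.1 _ (min_le_right _ _)).symm
    _ ≤ W x := hW.1 (min_le_left _ _)

theorem le_one_s5 (hW : IsNonnegCDF W) (x : ℝ) : W x ≤ 1 :=
  hW.1.ge_of_tendsto hW.2.2 x

theorem lt_one_s5 (hW : IsNonnegCDF W) (hWs : StrictMonoOn W (Ici 0)) (x : ℝ) : W x < 1 :=
  calc W x ≤ W (max x 0) := hW.1 (le_max_left _ _)
    _ < W (max x 0 + 1) :=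
      hWs (mem_Ici.mpr (le_max_right _ _))
        (mem_Ici.mpr ((le_max_right _ _).trans (lt_add_one _).le)) (lt_add_one _)
    _ ≤ 1 := hW.le_one_s5 _

theorem mem_Icc (hW : IsNonnegCDF W) (x : ℝ) : W x ∈ Icc 0 1 := ⟨hW.nonneg_s5 x, hW.le_one_s5 x⟩

theorem pos (hW : IsNonnegCDF W) (hWs : StrictMonoOn W (Ici 0)) {x : ℝ} (hx : 0 < x) : 0 < W x :=
  hW.2.1 0 le_rfl ▸ hWs self_mem_Ici hx.le hx

theorem exists_pos_eq (hW : IsNonnegCDF W) (hWc : Continuous W) {p : ℝ} (hp : p ∈ Ioo 0 1) :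
    ∃ x, 0 < x ∧ W x = p :=
  let ⟨_, hx⟩ := (hW.2.2.eventually_const_le hp.2).exists
  exists_pos_apply_eq hWc hW.2.1 hp.1 hx

theorem antitone_distortion (hW : IsNonnegCDF W) (hh : MonotoneOn h (Icc 0 1)) :
    Antitone fun x => h (1 - W x) := fun x y hxy =>
  hh ⟨by linarith [hW.le_one_s5 y], by linarith [hW.nonneg_s5 y]⟩
    ⟨by linarith [hW.le_one_s5 x], by linarith [hW.nonneg_s5 x]⟩ (by linarith [hW.1 hxy])

theorem monotone_distortedCDF (hW : IsNonnegCDF W) (hh : MonotoneOn h (Icc 0 1)) :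
    Monotone (distortedCDF h W) := fun _ _ hxy =>
  sub_le_sub_left (hW.antitone_distortion hh hxy) 1

theorem distortedCDF_eq_zero (hW : IsNonnegCDF W) (h1 : h 1 = 1) {x : ℝ} (hx : x ≤ 0) :
    distortedCDF h W x = 0 := by
  simp [distortedCDF, hW.2.1 x hx, h1]

theorem strictMonoOn_distortedCDF (hW : IsNonnegCDF W) (hWs : StrictMonoOn W (Ici 0))
    (hstrict : StrictMonoOn h (Icc 0 1)) : StrictMonoOn (distortedCDF h W) (Ici 0) :=
  fun x hx y hy hxy => sub_lt_sub_left (hstrict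
    ⟨by linarith [hW.le_one_s5 y], by linarith [hW.nonneg_s5 y]⟩
    ⟨by linarith [hW.le_one_s5 x], by linarith [hW.nonneg_s5 x]⟩
    (sub_lt_sub_left (hWs hx hy hxy) 1)) 1

theorem continuous_distortedCDF (hW : IsNonnegCDF W) (hWs : StrictMonoOn W (Ici 0))
    (hWc : Continuous W) (hh : ContinuousOn h (Ioc 0 1)) : Continuous (distortedCDF h W) :=
  continuous_const.sub <| hh.comp_continuous (continuous_const.sub hWc) fun x =>
    ⟨sub_pos.2 (hW.lt_one_s5 hWs x), by linarith [hW.nonneg_s5 x]⟩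

theorem exists_pos_distortedCDF_eq (hW : IsNonnegCDF W) (hWs : StrictMonoOn W (Ici 0))
    (hWc : Continuous W) (hdist : IsDistortionFn h)
    (hdiff : ∀ p ∈ Ioo (0:ℝ) 1, DifferentiableAt ℝ h p)
    (hI : IntegrableOn (fun x => h (1 - W x)) (Ioi 0)) {p : ℝ} (hp : p ∈ Ioo 0 1) :
    ∃ x, 0 < x ∧ distortedCDF h W x = p := by
  -- Otherwise `h (1 - W)` would stay above `1 - p > 0` on `(0, ∞)`.
  obtain ⟨x, hx⟩ : ∃ x, h (1 - W x) ≤ 1 - p := by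
    by_contra! hlt
    have hconst : IntegrableOn (fun _ => 1 - p) (Ioi (0:ℝ)) :=
      hI.mono' aestronglyMeasurable_const <| Filter.Eventually.of_forall fun x => by
        rw [Real.norm_of_nonneg (sub_pos.2 hp.2).le]
        exact (hlt x).le
    rcases (integrableOn_const_iff (C := 1 - p)).mp hconst with h0 | hfin
    · simp [(sub_pos.2 hp.2).ne'] at h0
    · simp at hfin
  exact exists_pos_apply_eq (hW.continuous_distortedCDF hWs hWc (hdist.continuousOn_Ioc hdiff))
    (fun _ => hW.distortedCDF_eq_zero hdist.2.2.2.1) hp.1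
    (show p ≤ distortedCDF h W x by rw [distortedCDF]; linarith)

theorem ewIntegral_distortedCDF_of_not_integrableOn (hW : IsNonnegCDF W)
    (hh : MonotoneOn h (Icc 0 1)) (hI : ¬IntegrableOn (fun x => h (1 - W x)) (Ioi 0)) (p : ℝ) :
    ewIntegral (distortedCDF h W) p = 0 := by
  rw [ewIntegral]
  generalize quantile (distortedCDF h W) p = Q
  simp only [distortedCDF, sub_sub_cancel]
  refine integral_undef fun hQ => hI ?_
  have hloc := (hW.antitone_distortion hh).locallyIntegrable (μ := volume)
  exact ((hloc.integrableOn_isCompact isCompact_Icc).union hQ).mono_set fun x hx =>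
    (le_or_gt x Q).imp (fun hxQ => ⟨le_of_lt hx, hxQ⟩) id

end IsNonnegCDF

noncomputable def ewMeasure (W : ℝ → ℝ) : Measure ℝ :=
  ((volume.restrict (Ioi 0)).withDensity fun x => ENNReal.ofReal (1 - W x)).map W

theorem isFiniteMeasure_ewMeasure {W : ℝ → ℝ} (hmean : IntegrableOn (fun x => 1 - W x) (Ioi 0)) :
    IsFiniteMeasure (ewMeasure W) :=
  have := isFiniteMeasure_withDensity_ofReal hmean.2
  Measure.isFiniteMeasure_map _ _

theorem nullSingletonClass_ewMeasure {W : ℝ → ℝ} (hWs : StrictMonoOn W (Ici 0))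
    (hWc : Continuous W) :
    NullSingletonClass (ewMeasure W) := by
  refine ⟨fun v => ?_⟩
  rw [ewMeasure, Measure.map_apply hWc.measurable (measurableSet_singleton v)]
  refine withDensity_absolutelyContinuous _ _ ?_
  rw [Measure.restrict_apply (hWc.measurable (measurableSet_singleton v))]
  exact Subsingleton.measure_zero (fun x hx y hy =>
    hWs.injOn (mem_Ici.2 (le_of_lt hx.2)) (mem_Ici.2 (le_of_lt hy.2)) (hx.1.trans hy.1.symm)) _

namespace IsNonnegCDF

variable {W h : ℝ → ℝ}

theorem ewMeasure_compl_Ioo (hW : IsNonnegCDF W) (hWs : StrictMonoOn W (Ici 0))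
    (hWc : Continuous W) : ewMeasure W (Ioo 0 1)ᶜ = 0 := by
  rw [ewMeasure, Measure.map_apply hWc.measurable measurableSet_Ioo.compl]
  refine withDensity_absolutelyContinuous _ _ ?_
  rw [Measure.restrict_apply (hWc.measurable measurableSet_Ioo.compl)]
  exact measure_mono_null (fun x hx => hx.1 ⟨hW.pos hWs hx.2, hW.lt_one_s5 hWs x⟩) measure_empty

theorem setLIntegral_ewMeasure_Ioi_apply (hW : IsNonnegCDF W) (hWs : StrictMonoOn W (Ici 0))
    (hWc : Continuous W) {x : ℝ} (hx : 0 ≤ x) {g : ℝ → ℝ≥0∞}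
    (hg : AEMeasurable g (ewMeasure W)) :
    ∫⁻ v in Ioi (W x), g v ∂ewMeasure W = ∫⁻ y in Ioi x, ENNReal.ofReal (1 - W y) * g (W y) := by
  have hg' := hg.restrict (s := Ioi (W x))
  rw [ewMeasure, Measure.restrict_map hWc.measurable measurableSet_Ioi,
    preimage_Ioi_apply_eq_Ioi hW.1 hWs hx] at hg' ⊢
  rw [lintegral_map' hg' hWc.aemeasurable, restrict_withDensity measurableSet_Ioi,
    lintegral_withDensity_eq_lintegral_mul₀' (by fun_prop),
    Measure.restrict_restrict measurableSet_Ioi,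
    inter_eq_left.2 (Ioi_subset_Ioi hx)]
  · rfl
  · rw [← restrict_withDensity measurableSet_Ioi]
    exact hg'.comp_aemeasurable hWc.aemeasurable

theorem ewIntegral_eq_toReal_ewMeasure (hW : IsNonnegCDF W) (hWs : StrictMonoOn W (Ici 0))
    (hWc : Continuous W) {u : ℝ} (hu : u ∈ Ioo 0 1) :
    ewIntegral W u = (ewMeasure W (Ioi u)).toReal := by
  obtain ⟨x, hx, rfl⟩ := hW.exists_pos_eq hWc hu
  rw [ewIntegral, quantile_apply_eq hW.1 hWs hx, ← setLIntegral_one,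
    hW.setLIntegral_ewMeasure_Ioi_apply hWs hWc hx.le aemeasurable_const,
    integral_eq_lintegral_of_nonneg_ae
      (Filter.Eventually.of_forall fun y => sub_nonneg.2 (hW.le_one_s5 y))
      (continuous_const.sub hWc).aestronglyMeasurable]
  simp only [mul_one]

theorem ewMeasure_Ioi_ne_zero (hW : IsNonnegCDF W) (hWs : StrictMonoOn W (Ici 0))
    (hWc : Continuous W) {u : ℝ} (hu : u ∈ Ioo 0 1) : ewMeasure W (Ioi u) ≠ 0 := by
  obtain ⟨x, hx, rfl⟩ := hW.exists_pos_eq hWc hu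
  rw [ewMeasure, Measure.map_apply hWc.measurable measurableSet_Ioi,
    preimage_Ioi_apply_eq_Ioi hW.1 hWs hx.le, Ne, withDensity_apply_eq_zero' (by fun_prop),
    Measure.restrict_apply' measurableSet_Ioi]
  simp [hW.lt_one_s5 hWs, Ioi_inter_Ioi, hx.le]

theorem setLIntegral_distortionRatio_ewMeasure (hW : IsNonnegCDF W) (hWs : StrictMonoOn W (Ici 0))
    (hWc : Continuous W) (hanti : Antistarshaped h) {x : ℝ} (hx : 0 ≤ x) :
    ∫⁻ v in Ioi (W x), ENNReal.ofReal (distortionRatio h v) ∂ewMeasure W =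
      ∫⁻ y in Ioi x, ENNReal.ofReal (h (1 - W y)) := by
  have hmeas : AEMeasurable (distortionRatio h) (ewMeasure W) :=
    aemeasurable_of_monotoneOn_of_measure_compl_eq_zero measurableSet_Ioo
      (hW.ewMeasure_compl_Ioo hWs hWc) (hanti.monotoneOn_distortionRatio.mono Ioo_subset_Ico_self)
  rw [hW.setLIntegral_ewMeasure_Ioi_apply hWs hWc hx hmeas.ennreal_ofReal]
  refine lintegral_congr fun y => ?_
  have hy : 0 < 1 - W y := sub_pos.2 (hW.lt_one_s5 hWs y)
  rw [← ENNReal.ofReal_mul hy.le, distortionRatio, mul_div_cancel₀ _ hy.ne']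

theorem ewIntegral_distortedCDF_apply (hW : IsNonnegCDF W) (hWs : StrictMonoOn W (Ici 0))
    (hWc : Continuous W) (hdist : IsDistortionFn h) (hstrict : StrictMonoOn h (Icc 0 1))
    (hanti : Antistarshaped h) {x : ℝ} (hx : 0 < x) :
    ewIntegral (distortedCDF h W) (distortedCDF h W x) =
      (∫⁻ v in Ioi (W x), ENNReal.ofReal (distortionRatio h v) ∂ewMeasure W).toReal := by
  rw [ewIntegral, quantile_apply_eq (hW.monotone_distortedCDF hdist.1)
      (hW.strictMonoOn_distortedCDF hWs hstrict) hx,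
    hW.setLIntegral_distortionRatio_ewMeasure hWs hWc hanti hx.le,
    ← integral_eq_lintegral_of_nonneg_ae
      (Filter.Eventually.of_forall fun y => (hdist.2.2.2.2 ⟨sub_nonneg.2 (hW.le_one_s5 y),
        sub_le_self _ (hW.nonneg_s5 y)⟩).1)
      (hW.antitone_distortion hdist.1).measurable.aestronglyMeasurable]
  simp only [distortedCDF, sub_sub_cancel]

theorem lintegral_distortionRatio_ewMeasure_ne_top (hW : IsNonnegCDF W)
    (hWs : StrictMonoOn W (Ici 0)) (hWc : Continuous W) (hanti : Antistarshaped h)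
    (hI : IntegrableOn (fun x => h (1 - W x)) (Ioi 0)) {u : ℝ} (hu : u ∈ Ioo 0 1) :
    ∫⁻ v in Ioi u, ENNReal.ofReal (distortionRatio h v) ∂ewMeasure W ≠ ∞ := by
  obtain ⟨x, hx, rfl⟩ := hW.exists_pos_eq hWc hu
  rw [hW.setLIntegral_distortionRatio_ewMeasure hWs hWc hanti hx.le]
  exact (hI.mono_set (Ioi_subset_Ioi hx.le)).setLIntegral_lt_top.ne

theorem lintegral_distortionRatio_ewMeasure_ne_zero (hW : IsNonnegCDF W)
    (hWs : StrictMonoOn W (Ici 0)) (hWc : Continuous W) (hanti : Antistarshaped h) (h1 : h 1 = 1)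
    {u : ℝ} (hu : u ∈ Ioo 0 1) :
    ∫⁻ v in Ioi u, ENNReal.ofReal (distortionRatio h v) ∂ewMeasure W ≠ 0 := by
  refine ne_bot_of_le_ne_bot (hW.ewMeasure_Ioi_ne_zero hWs hWc hu) ?_
  rw [← setLIntegral_one]
  refine lintegral_mono_ae <| ae_restrict_of_ae <|
    (show ∀ᵐ v ∂ewMeasure W, v ∈ Ioo 0 1 from mem_ae_iff.mpr (hW.ewMeasure_compl_Ioo hWs hWc)).mono
      fun v hv => ?_
  exact ENNReal.one_le_ofReal.2 (hanti.one_le_distortionRatio h1 ⟨le_of_lt hv.1, hv.2⟩)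

end IsNonnegCDF

namespace DMRL_le

variable {F G : ℝ → ℝ}

theorem ewMeasure_Ioi_mul_le (hF : IsNonnegCDF F) (hFs : StrictMonoOn F (Ici 0))
    (hFc : Continuous F) (hG : IsNonnegCDF G) (hGs : StrictMonoOn G (Ici 0)) (hGc : Continuous G)
    (hFmean : IntegrableOn (fun x => 1 - F x) (Ioi 0))
    (hGmean : IntegrableOn (fun x => 1 - G x) (Ioi 0)) (hle : DMRL_le F G) {u v : ℝ}
    (hu : 0 < u) (huv : u ≤ v) :
    ewMeasure G (Ioi u) * ewMeasure F (Ioi v) ≤ ewMeasure G (Ioi v) * ewMeasure F (Ioi u) := by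
  have := isFiniteMeasure_ewMeasure hFmean
  have := isFiniteMeasure_ewMeasure hGmean
  rcases lt_or_ge v 1 with hv1 | hv1
  · have hu' : u ∈ Ioo 0 1 := ⟨hu, huv.trans_lt hv1⟩
    have hv' : v ∈ Ioo 0 1 := ⟨hu.trans_le huv, hv1⟩
    have hratio := hle hu' hv' huv
    dsimp only at hratio
    rwa [hF.ewIntegral_eq_toReal_ewMeasure hFs hFc hu',
      hF.ewIntegral_eq_toReal_ewMeasure hFs hFc hv',
      hG.ewIntegral_eq_toReal_ewMeasure hGs hGc hu', hG.ewIntegral_eq_toReal_ewMeasure hGs hGc hv',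
      ENNReal.toReal_div_le_toReal_div_iff (measure_ne_top _ _)
        (hF.ewMeasure_Ioi_ne_zero hFs hFc hu') (measure_ne_top _ _) (measure_ne_top _ _)
        (hF.ewMeasure_Ioi_ne_zero hFs hFc hv') (measure_ne_top _ _)] at hratio
  · have hnull : ∀ {W}, IsNonnegCDF W → StrictMonoOn W (Ici 0) → Continuous W →
        ewMeasure W (Ioi v) = 0 := fun hW hWs hWc =>
      measure_mono_null (fun w (hw : v < w) (hw' : w ∈ Ioo 0 1) => hw'.2.not_ge (hv1.trans hw.le))
        (hW.ewMeasure_compl_Ioo hWs hWc)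
    simp [hnull hF hFs hFc, hnull hG hGs hGc]

theorem monotoneOn_lintegral_distortionRatio_div {h : ℝ → ℝ} (hF : IsNonnegCDF F)
    (hFs : StrictMonoOn F (Ici 0)) (hFc : Continuous F) (hG : IsNonnegCDF G)
    (hGs : StrictMonoOn G (Ici 0)) (hGc : Continuous G)
    (hFmean : IntegrableOn (fun x => 1 - F x) (Ioi 0))
    (hGmean : IntegrableOn (fun x => 1 - G x) (Ioi 0)) (hle : DMRL_le F G)
    (hanti : Antistarshaped h) (h1 : h 1 = 1)
    (hIF : IntegrableOn (fun x => h (1 - F x)) (Ioi 0))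
    (hIG : IntegrableOn (fun x => h (1 - G x)) (Ioi 0)) :
    MonotoneOn (fun u =>
      (∫⁻ v in Ioi u, ENNReal.ofReal (distortionRatio h v) ∂ewMeasure G).toReal /
        (∫⁻ v in Ioi u, ENNReal.ofReal (distortionRatio h v) ∂ewMeasure F).toReal) (Ioo 0 1) := by
  intro u hu u' hu' huu'
  have := isFiniteMeasure_ewMeasure hFmean
  have := isFiniteMeasure_ewMeasure hGmean
  have := nullSingletonClass_ewMeasure hFs hFc
  have := nullSingletonClass_ewMeasure hGs hGc
  dsimp only
  rw [ENNReal.toReal_div_le_toReal_div_iff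
    (hG.lintegral_distortionRatio_ewMeasure_ne_top hGs hGc hanti hIG hu)
    (hF.lintegral_distortionRatio_ewMeasure_ne_zero hFs hFc hanti h1 hu)
    (hF.lintegral_distortionRatio_ewMeasure_ne_top hFs hFc hanti hIF hu)
    (hG.lintegral_distortionRatio_ewMeasure_ne_top hGs hGc hanti hIG hu')
    (hF.lintegral_distortionRatio_ewMeasure_ne_zero hFs hFc hanti h1 hu')
    (hF.lintegral_distortionRatio_ewMeasure_ne_top hFs hFc hanti hIF hu')]
  exact lintegral_Ioi_mul_le_of_measure_Ioi_mul_le measurableSet_Ioo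
    (hF.ewMeasure_compl_Ioo hFs hFc)
    (hG.ewMeasure_compl_Ioo hGs hGc) (hanti.monotoneOn_distortionRatio.mono Ioo_subset_Ico_self)
    (fun v hv => zero_le_one.trans (hanti.one_le_distortionRatio h1 ⟨le_of_lt hv.1, hv.2⟩)) huu'
    (fun a b ha hab => hle.ewMeasure_Ioi_mul_le hF hFs hFc hG hGs hGc hFmean hGmean
      (hu.1.trans_le ha) hab)
    (hF.ewMeasure_Ioi_ne_zero hFs hFc hu')

end DMRL_le

/-- **Theorem 4 (preservation of the dmrl order).**
Let `X`, `Y` be nonnegative absolutely continuous random variables with finite means and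
strictly increasing distribution functions `F`, `G`, and let `h` be an antistarshaped,
strictly increasing, differentiable distortion function.  If `X ≤_dmrl Y`, then
`X_h ≤_dmrl Y_h`. -/
theorem dmrl_preserved_by_antistarshaped_distortion
    (F G f g h : ℝ → ℝ)
    (hF : IsNonnegCDF F) (hG : IsNonnegCDF G)
    (hFstrict : StrictMonoOn F (Ici 0)) (hGstrict : StrictMonoOn G (Ici 0))
    (hfd : ∀ x : ℝ, HasDerivAt F (f x) x) (hgd : ∀ x : ℝ, HasDerivAt G (g x) x)
    (hFmean : IntegrableOn (fun x => 1 - F x) (Ioi 0) volume)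
    (hGmean : IntegrableOn (fun x => 1 - G x) (Ioi 0) volume)
    (hdist : IsDistortionFn h) (hstrict : StrictMonoOn h (Icc 0 1))
    (hdiff : ∀ p ∈ Ioo (0:ℝ) 1, DifferentiableAt ℝ h p)
    (hanti : Antistarshaped h)
    (hle : DMRL_le F G) :
    DMRL_le (distortedCDF h F) (distortedCDF h G) := by
  have hFc : Continuous F := continuous_iff_continuousAt.2 fun x => (hfd x).continuousAt
  have hGc : Continuous G := continuous_iff_continuousAt.2 fun x => (hgd x).continuousAt
  -- Without integrability the distorted excess-wealth integrals take the junk value `0`.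
  by_cases hIF : IntegrableOn (fun x => h (1 - F x)) (Ioi 0)
  swap
  · intro p _ q _ _
    simp only [hF.ewIntegral_distortedCDF_of_not_integrableOn hdist.1 hIF, div_zero, le_refl]
  by_cases hIG : IntegrableOn (fun x => h (1 - G x)) (Ioi 0)
  swap
  · intro p _ q _ _
    simp only [hG.ewIntegral_distortedCDF_of_not_integrableOn hdist.1 hIG, zero_div, le_refl]
  intro p hp q hq hpq
  obtain ⟨x, hx, rfl⟩ := hF.exists_pos_distortedCDF_eq hFstrict hFc hdist hdiff hIF hp
  obtain ⟨x', hx', rfl⟩ := hF.exists_pos_distortedCDF_eq hFstrict hFc hdist hdiff hIF hq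
  obtain ⟨y, hy, hyx⟩ := hG.exists_pos_distortedCDF_eq hGstrict hGc hdist hdiff hIG hp
  obtain ⟨y', hy', hyx'⟩ := hG.exists_pos_distortedCDF_eq hGstrict hGc hdist hdiff hIG hq
  dsimp only
  rw [hF.ewIntegral_distortedCDF_apply hFstrict hFc hdist hstrict hanti hx,
    hF.ewIntegral_distortedCDF_apply hFstrict hFc hdist hstrict hanti hx', ← hyx, ← hyx',
    hG.ewIntegral_distortedCDF_apply hGstrict hGc hdist hstrict hanti hy,
    hG.ewIntegral_distortedCDF_apply hGstrict hGc hdist hstrict hanti hy',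
    (distortedCDF_eq_distortedCDF_iff hstrict (hG.mem_Icc y) (hF.mem_Icc x)).1 hyx,
    (distortedCDF_eq_distortedCDF_iff hstrict (hG.mem_Icc y') (hF.mem_Icc x')).1 hyx']
  exact hle.monotoneOn_lintegral_distortionRatio_div hF hFstrict hFc hG hGstrict hGc hFmean hGmean
    hanti hdist.2.2.2.1 hIF hIG ⟨hF.pos hFstrict hx, hF.lt_one_s5 hFstrict x⟩
    ⟨hF.pos hFstrict hx', hF.lt_one_s5 hFstrict x'⟩
    ((distortedCDF_le_distortedCDF_iff hstrict (hF.mem_Icc x) (hF.mem_Icc x')).1 hpq)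
end

section
/- Let X and Y be nonnegative absolutely continuous random variables with finite means and strictly increasing distribution functions F and G, and let h be a concave, strictly increasing, differentiable distortion function. If X ≤_dmrl Y, then X_h ≤_dmrl Y_h. -/
open MeasureTheory Set Filter

/-!
Write `V_F(u) = ∫_{F⁻¹(u)}^∞ F̄` and `W_F(u) = ∫_{F⁻¹(u)}^∞ h ∘ F̄`. Level `p` of `X_h` corresponds
to a level `ℓ(p)` of `X` that is increasing in `p` (`distortedLevel`), and the excess wealth of
`X_h` at `p` is `W_F(ℓ(p))`; so it suffices to show that `W_G / W_F` increases whenever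
`V_G / V_F` does.

Since `h` is concave with `h 0 = 0`, `K(v) = h(1 - v) / (1 - v)` is increasing and
`h(F̄) = F̄ · K(F)`. The layer-cake formula for `K ∘ F` against the measure `F̄ dx` gives
`W_F(u) = ∫_0^∞ V_F(max u ℓ_t) dt`, where `ℓ_t` is the infimum of the levels at which `K > t`
(the layer is empty for `F` exactly when it is empty for `G`). For `a ≤ b`, the DMRL inequality at
the levels `max a ℓ_t ≤ max b ℓ_t` holds layer by layer and integrates to
`W_G(a) - W_G(b) ≤ r(b) (W_F(a) - W_F(b))` and `r(b) W_F(b) ≤ W_G(b)`, with `r = V_G / V_F`;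
together these give `W_G(a) W_F(b) ≤ W_G(b) W_F(a)`.
-/

namespace IsNonnegCDF

variable {F : ℝ → ℝ}

theorem nonneg_s6 (hF : IsNonnegCDF F) (x : ℝ) : 0 ≤ F x := by
  have := hF.2.1 (min x 0) (min_le_right x 0)
  linarith [hF.1 (min_le_left x 0)]

theorem le_one_s6 (hF : IsNonnegCDF F) (x : ℝ) : F x ≤ 1 :=
  hF.1.ge_of_tendsto hF.2.2 x

theorem lt_one_s6 (hF : IsNonnegCDF F) (hFs : StrictMonoOn F (Ici 0)) (x : ℝ) : F x < 1 := by
  rcases le_or_gt x 0 with hx | hx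
  · rw [hF.2.1 x hx]; exact one_pos
  · calc F x < F (x + 1) := hFs (mem_Ici.2 hx.le) (mem_Ici.2 (by linarith)) (by linarith)
      _ ≤ 1 := hF.le_one_s6 _

theorem one_sub_mem_Icc (hF : IsNonnegCDF F) (x : ℝ) : 1 - F x ∈ Icc (0:ℝ) 1 :=
  ⟨sub_nonneg.2 (hF.le_one_s6 x), by linarith [hF.nonneg_s6 x]⟩

theorem one_sub_mem_Ioc (hF : IsNonnegCDF F) (hFs : StrictMonoOn F (Ici 0)) (x : ℝ) :
    1 - F x ∈ Ioc (0:ℝ) 1 :=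
  ⟨sub_pos.2 (hF.lt_one_s6 hFs x), (hF.one_sub_mem_Icc x).2⟩

theorem pos_of_le_apply (hF : IsNonnegCDF F) {u x : ℝ} (hu : 0 < u) (hx : u ≤ F x) : 0 < x :=
  not_le.1 fun hx0 => by linarith [hF.2.1 x hx0]

theorem quantile_nonneg (hF : IsNonnegCDF F) {u : ℝ} (hu : 0 < u) : 0 ≤ quantile F u :=
  Real.sInf_nonneg fun _ hx => (hF.pos_of_le_apply hu hx).le

theorem le_apply_quantile (hF : IsNonnegCDF F) (hFc : Continuous F) {u : ℝ} (hu : u ∈ Ioo 0 1) :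
    u ≤ F (quantile F u) :=
  (isClosed_le continuous_const hFc).csInf_mem
    (hF.2.2.eventually (eventually_ge_nhds hu.2)).exists
    ⟨0, fun _ hx => (hF.pos_of_le_apply hu.1 hx).le⟩

theorem quantile_pos (hF : IsNonnegCDF F) (hFc : Continuous F) {u : ℝ} (hu : u ∈ Ioo 0 1) :
    0 < quantile F u :=
  hF.pos_of_le_apply hu.1 (hF.le_apply_quantile hFc hu)

theorem quantile_le_iff (hF : IsNonnegCDF F) (hFc : Continuous F) {u : ℝ} (hu : u ∈ Ioo 0 1)
    (x : ℝ) : quantile F u ≤ x ↔ u ≤ F x :=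
  ⟨fun hx => (hF.le_apply_quantile hFc hu).trans (hF.1 hx),
    fun hx => csInf_le ⟨0, fun _ hy => (hF.pos_of_le_apply hu.1 hy).le⟩ hx⟩

theorem apply_quantile (hF : IsNonnegCDF F) (hFc : Continuous F) {u : ℝ} (hu : u ∈ Ioo 0 1) :
    F (quantile F u) = u := by
  have hu0 : u ∈ Icc (F 0) (F (quantile F u)) :=
    ⟨by rw [hF.2.1 0 le_rfl]; exact hu.1.le, hF.le_apply_quantile hFc hu⟩
  obtain ⟨y, hy, hFy⟩ :=
    intermediate_value_Icc (hF.quantile_pos hFc hu).le hFc.continuousOn hu0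
  rw [← le_antisymm hy.2 ((hF.quantile_le_iff hFc hu y).2 hFy.ge), hFy]

theorem quantile_lt_iff (hF : IsNonnegCDF F) (hFs : StrictMonoOn F (Ici 0))
    (hFc : Continuous F) {u : ℝ} (hu : u ∈ Ioo 0 1) (x : ℝ) :
    quantile F u < x ↔ u < F x := by
  have hQ := hF.quantile_pos hFc hu
  refine ⟨fun hx => ?_, fun hx => not_le.1 fun hxQ => ?_⟩
  · rw [← hF.apply_quantile hFc hu]
    exact hFs (mem_Ici.2 hQ.le) (mem_Ici.2 (hQ.trans hx).le) hx
  · linarith [hF.1 hxQ, hF.apply_quantile hFc hu]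

theorem quantile_mono (hF : IsNonnegCDF F) (hFc : Continuous F) {u v : ℝ} (hu : u ∈ Ioo 0 1)
    (hv : v ∈ Ioo 0 1) (huv : u ≤ v) : quantile F u ≤ quantile F v := by
  rw [hF.quantile_le_iff hFc hu, hF.apply_quantile hFc hv]
  exact huv

end IsNonnegCDF

section ExcessWealth

variable {F G : ℝ → ℝ}

theorem ewIntegral_pos (hF : IsNonnegCDF F) (hFs : StrictMonoOn F (Ici 0)) (hFc : Continuous F)
    (hFi : IntegrableOn (fun x => 1 - F x) (Ioi 0)) {u : ℝ} (hu : u ∈ Ioo 0 1) :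
    0 < ewIntegral F u := by
  have hpos (x : ℝ) : 0 < 1 - F x := (hF.one_sub_mem_Ioc hFs x).1
  rw [ewIntegral, setIntegral_pos_iff_support_of_nonneg_ae (ae_of_all _ fun x => (hpos x).le)
    (hFi.mono_set (Ioi_subset_Ioi (hF.quantile_pos hFc hu).le)),
    Function.support_eq_univ fun x => (hpos x).ne', univ_inter]
  simp [Real.volume_Ioi]

theorem DMRL_le.mul_le_mul (hle : DMRL_le F G) (hF : IsNonnegCDF F)
    (hFs : StrictMonoOn F (Ici 0)) (hFc : Continuous F)
    (hFi : IntegrableOn (fun x => 1 - F x) (Ioi 0)) {u v : ℝ} (hu : u ∈ Ioo 0 1)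
    (hv : v ∈ Ioo 0 1) (huv : u ≤ v) :
    ewIntegral G u * ewIntegral F v ≤ ewIntegral G v * ewIntegral F u :=
  (div_le_div_iff₀ (ewIntegral_pos hF hFs hFc hFi hu) (ewIntegral_pos hF hFs hFc hFi hv)).1
    (hle hu hv huv)

end ExcessWealth

section Antistarshaped

variable {F h : ℝ → ℝ}

theorem ConcaveOn.antistarshaped (hconc : ConcaveOn ℝ (Icc 0 1) h) (h0 : h 0 = 0) :
    Antistarshaped h := by
  intro x hx y hy hxy
  have := hconc.neg.secant_mono (a := 0) ⟨le_rfl, zero_le_one⟩ (Ioc_subset_Icc_self hx)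
    (Ioc_subset_Icc_self hy) hx.1.ne' hy.1.ne' hxy
  simp only [Pi.neg_apply, h0, neg_zero, sub_zero, neg_div] at this
  linarith

theorem Antistarshaped.self_le (hh : Antistarshaped h) (h1 : h 1 = 1) {t : ℝ}
    (ht : t ∈ Ioc 0 1) : t ≤ h t := by
  have : h 1 / 1 ≤ h t / t := hh ht ⟨one_pos, le_rfl⟩ ht.2
  rwa [h1, div_one, one_le_div ht.1] at this

theorem Antistarshaped.one_sub_le (hh : Antistarshaped h) (h1 : h 1 = 1) (hF : IsNonnegCDF F)
    (hFs : StrictMonoOn F (Ici 0)) (x : ℝ) : 1 - F x ≤ h (1 - F x) :=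
  hh.self_le h1 (hF.one_sub_mem_Ioc hFs x)

theorem Antistarshaped.monotone_comp (hh : Antistarshaped h) (hF : IsNonnegCDF F)
    (hFs : StrictMonoOn F (Ici 0)) : Monotone fun x => h (1 - F x) / (1 - F x) :=
  fun x y hxy => hh (hF.one_sub_mem_Ioc hFs y) (hF.one_sub_mem_Ioc hFs x) (by linarith [hF.1 hxy])

end Antistarshaped

def distortionSuperlevel (h : ℝ → ℝ) (t : ℝ) : Set ℝ :=
  {v | v ∈ Ioo 0 1 ∧ t < h (1 - v) / (1 - v)}

noncomputable def levelTail (F : ℝ → ℝ) (L : Set ℝ) (u : ℝ) : ℝ :=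
  ∫ x in {x | quantile F u < x ∧ F x ∈ L}, (1 - F x)

noncomputable def distortedEwIntegral (h F : ℝ → ℝ) (u : ℝ) : ℝ :=
  ∫ x in Ioi (quantile F u), h (1 - F x)

section LayerCake

variable {F h : ℝ → ℝ}

theorem distortionSuperlevel_upper (hh : Antistarshaped h) {t v w : ℝ}
    (hv : v ∈ distortionSuperlevel h t) (hvw : v ≤ w) (hw : w < 1) :
    w ∈ distortionSuperlevel h t :=
  ⟨⟨hv.1.1.trans_le hvw, hw⟩, hv.2.trans_le
    (hh ⟨sub_pos.2 hw, by linarith [hv.1.1]⟩ ⟨sub_pos.2 hv.1.2, by linarith [hv.1.1]⟩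
      (by linarith))⟩

theorem levelTail_nonneg (hF : IsNonnegCDF F) (L : Set ℝ) (u : ℝ) : 0 ≤ levelTail F L u :=
  setIntegral_nonneg_of_ae (ae_of_all _ fun x => (hF.one_sub_mem_Icc x).1)

theorem levelTail_eq_ewIntegral (hF : IsNonnegCDF F) (hFs : StrictMonoOn F (Ici 0))
    (hFc : Continuous F) {L : Set ℝ} (hL : L ⊆ Ioo 0 1)
    (hup : ∀ v ∈ L, ∀ w, v ≤ w → w < 1 → w ∈ L) (hne : L.Nonempty) {u : ℝ}
    (hu : u ∈ Ioo 0 1) : levelTail F L u = ewIntegral F (max u (sInf L)) := by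
  have hbdd : BddBelow L := ⟨0, fun v hv => (hL hv).1.le⟩
  obtain ⟨v, hv⟩ := hne
  set m := max u (sInf L)
  have hm : m ∈ Ioo 0 1 :=
    ⟨hu.1.trans_le (le_max_left _ _), max_lt hu.2 ((csInf_le hbdd hv).trans_lt (hL hv).2)⟩
  have hsub : Ioi (quantile F m) ⊆ {x | quantile F u < x ∧ F x ∈ L} := by
    intro x hx
    have hmx := (hF.quantile_lt_iff hFs hFc hm x).1 hx
    obtain ⟨w, hw, hwx⟩ := exists_lt_of_csInf_lt ⟨v, hv⟩ ((le_max_right u _).trans_lt hmx)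
    exact ⟨(hF.quantile_lt_iff hFs hFc hu x).2 ((le_max_left _ _).trans_lt hmx),
      hup w hw _ hwx.le (hF.lt_one_s6 hFs x)⟩
  have hsup : {x | quantile F u < x ∧ F x ∈ L} ⊆ Ici (quantile F m) := by
    rintro x ⟨hux, hxL⟩
    exact (hF.quantile_le_iff hFc hm x).2
      (max_le ((hF.quantile_lt_iff hFs hFc hu x).1 hux).le (csInf_le hbdd hxL))
  rw [levelTail, ewIntegral]
  exact setIntegral_congr_set
    ((hsup.eventuallyLE.trans Ioi_ae_eq_Ici.symm.le).antisymm hsub.eventuallyLE)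

theorem antitone_levelTail_distortionSuperlevel (hF : IsNonnegCDF F) (hFc : Continuous F)
    (hFi : IntegrableOn (fun x => 1 - F x) (Ioi 0)) {u : ℝ} (hu : u ∈ Ioo 0 1) :
    Antitone fun t => levelTail F (distortionSuperlevel h t) u := by
  intro t t' htt'
  refine setIntegral_mono_set
    ((hFi.mono_set (Ioi_subset_Ioi (hF.quantile_pos hFc hu).le)).mono_set
      fun x hx => mem_Ioi.2 hx.1)
    (ae_of_all _ fun x => (hF.one_sub_mem_Icc x).1) (LE.le.eventuallyLE fun x hx => ?_)
  exact ⟨hx.1, hx.2.1, htt'.trans_lt hx.2.2⟩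

theorem ofReal_distortedEwIntegral_eq_lintegral (hF : IsNonnegCDF F)
    (hFs : StrictMonoOn F (Ici 0)) (hFc : Continuous F)
    (hFi : IntegrableOn (fun x => 1 - F x) (Ioi 0)) (hh : Antistarshaped h) (h1 : h 1 = 1)
    (hWi : IntegrableOn (fun x => h (1 - F x)) (Ioi 0)) {u : ℝ} (hu : u ∈ Ioo 0 1) :
    ENNReal.ofReal (distortedEwIntegral h F u) =
      ∫⁻ t in Ioi 0, ENNReal.ofReal (levelTail F (distortionSuperlevel h t) u) := by
  have hQ := hF.quantile_pos hFc hu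
  have hS := hF.one_sub_mem_Ioc hFs
  set φ := fun x => h (1 - F x) / (1 - F x)
  have hφ : Measurable φ := (hh.monotone_comp hF hFs).measurable
  have hmeas (t : ℝ) : MeasurableSet {x | t < φ x} := measurableSet_lt measurable_const hφ
  -- `h (1 - F) = (1 - F) * φ`: integrate `φ` layer by layer against the density `1 - F`.
  have hlayer := lintegral_eq_lintegral_meas_lt
    ((volume.restrict (Ioi (quantile F u))).withDensity fun x => ENNReal.ofReal (1 - F x))
    (ae_of_all _ fun x => div_nonneg ((hS x).1.le.trans (hh.one_sub_le h1 hF hFs x)) (hS x).1.le)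
    hφ.aemeasurable
  have hρ : Measurable fun x => ENNReal.ofReal (1 - F x) :=
    (measurable_const.sub hFc.measurable).ennreal_ofReal
  rw [lintegral_withDensity_eq_lintegral_mul _ hρ hφ.ennreal_ofReal] at hlayer
  rw [distortedEwIntegral, ofReal_integral_eq_lintegral_ofReal
    (hWi.mono_set (Ioi_subset_Ioi hQ.le))
    (ae_of_all _ fun x => (hS x).1.le.trans (hh.one_sub_le h1 hF hFs x))]
  calc ∫⁻ x in Ioi (quantile F u), ENNReal.ofReal (h (1 - F x))
      = ∫⁻ x in Ioi (quantile F u),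
          ((fun x => ENNReal.ofReal (1 - F x)) * fun x => ENNReal.ofReal (φ x)) x := by
        refine lintegral_congr fun x => ?_
        rw [Pi.mul_apply, ← ENNReal.ofReal_mul (hS x).1.le, mul_div_cancel₀ _ (hS x).1.ne']
    _ = _ := hlayer
    _ = _ := by
        refine setLIntegral_congr_fun measurableSet_Ioi fun t _ => ?_
        rw [withDensity_apply _ (hmeas t), Measure.restrict_restrict (hmeas t), levelTail,
          ofReal_integral_eq_lintegral_ofReal
            ((hFi.mono_set (Ioi_subset_Ioi hQ.le)).mono_set fun x hx => mem_Ioi.2 hx.1)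
            (ae_of_all _ fun x => (hS x).1.le)]
        congr 2
        ext x
        refine ⟨fun ⟨htx, hx⟩ => ⟨hx, ⟨?_, hF.lt_one_s6 hFs x⟩, htx⟩, fun ⟨hx, _, htx⟩ => ⟨htx, hx⟩⟩
        exact hu.1.trans ((hF.quantile_lt_iff hFs hFc hu x).1 hx)

theorem ofReal_mul_distortedEwIntegral_eq_lintegral (hF : IsNonnegCDF F)
    (hFs : StrictMonoOn F (Ici 0)) (hFc : Continuous F)
    (hFi : IntegrableOn (fun x => 1 - F x) (Ioi 0)) (hh : Antistarshaped h) (h1 : h 1 = 1)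
    (hWi : IntegrableOn (fun x => h (1 - F x)) (Ioi 0)) {u c : ℝ} (hu : u ∈ Ioo 0 1)
    (hc : 0 ≤ c) :
    ENNReal.ofReal (c * distortedEwIntegral h F u) =
      ∫⁻ t in Ioi 0, ENNReal.ofReal (c * levelTail F (distortionSuperlevel h t) u) := by
  simp_rw [ENNReal.ofReal_mul hc]
  rw [lintegral_const_mul' _ _ ENNReal.ofReal_ne_top,
    ofReal_distortedEwIntegral_eq_lintegral hF hFs hFc hFi hh h1 hWi hu]

end LayerCake

section DistortedExcessWealth

variable {F G h : ℝ → ℝ}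

theorem distortedEwIntegral_nonneg (hF : IsNonnegCDF F) (hFs : StrictMonoOn F (Ici 0))
    (hh : Antistarshaped h) (h1 : h 1 = 1) (u : ℝ) : 0 ≤ distortedEwIntegral h F u :=
  setIntegral_nonneg measurableSet_Ioi fun x _ =>
    (hF.one_sub_mem_Ioc hFs x).1.le.trans (hh.one_sub_le h1 hF hFs x)

theorem distortedEwIntegral_pos (hF : IsNonnegCDF F) (hFs : StrictMonoOn F (Ici 0))
    (hFc : Continuous F) (hFi : IntegrableOn (fun x => 1 - F x) (Ioi 0))
    (hh : Antistarshaped h) (h1 : h 1 = 1)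
    (hWi : IntegrableOn (fun x => h (1 - F x)) (Ioi 0)) {u : ℝ} (hu : u ∈ Ioo 0 1) :
    0 < distortedEwIntegral h F u := by
  have hQ := Ioi_subset_Ioi (hF.quantile_pos hFc hu).le
  exact (ewIntegral_pos hF hFs hFc hFi hu).trans_le (setIntegral_mono_on (hFi.mono_set hQ)
    (hWi.mono_set hQ) measurableSet_Ioi fun x _ => hh.one_sub_le h1 hF hFs x)

theorem distortedEwIntegral_anti (hF : IsNonnegCDF F) (hFs : StrictMonoOn F (Ici 0))
    (hFc : Continuous F) (hh : Antistarshaped h) (h1 : h 1 = 1)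
    (hWi : IntegrableOn (fun x => h (1 - F x)) (Ioi 0)) {a b : ℝ} (ha : a ∈ Ioo 0 1)
    (hb : b ∈ Ioo 0 1) (hab : a ≤ b) :
    distortedEwIntegral h F b ≤ distortedEwIntegral h F a :=
  setIntegral_mono_set (hWi.mono_set (Ioi_subset_Ioi (hF.quantile_pos hFc ha).le))
    (ae_of_all _ fun x => (hF.one_sub_mem_Ioc hFs x).1.le.trans (hh.one_sub_le h1 hF hFs x))
    (Ioi_subset_Ioi (hF.quantile_mono hFc ha hb hab)).eventuallyLE

theorem cross_max_le {VF VG : ℝ → ℝ}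
    (hcross : ∀ u v, u ∈ Ioo (0:ℝ) 1 → v ∈ Ioo (0:ℝ) 1 → u ≤ v → VG u * VF v ≤ VG v * VF u)
    {a b ℓ : ℝ} (ha : a ∈ Ioo 0 1) (hb : b ∈ Ioo 0 1) (hab : a ≤ b) :
    VF b * VG (max a ℓ) + VG b * VF (max b ℓ) ≤ VG b * VF (max a ℓ) + VF b * VG (max b ℓ) := by
  rcases le_total (max a ℓ) b with hm | hm
  · rw [max_eq_left ((le_max_right a ℓ).trans hm)]
    linarith [hcross _ b ⟨ha.1.trans_le (le_max_left a ℓ), hm.trans_lt hb.2⟩ hb hm]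
  · rw [le_antisymm (max_le hm (le_max_right a ℓ)) (max_le_max_right ℓ hab)]
    linarith

theorem levelTail_cross (hF : IsNonnegCDF F) (hFs : StrictMonoOn F (Ici 0)) (hFc : Continuous F)
    (hG : IsNonnegCDF G) (hGs : StrictMonoOn G (Ici 0)) (hGc : Continuous G)
    (hcross : ∀ u v, u ∈ Ioo (0:ℝ) 1 → v ∈ Ioo (0:ℝ) 1 → u ≤ v →
      ewIntegral G u * ewIntegral F v ≤ ewIntegral G v * ewIntegral F u)
    {L : Set ℝ} (hL : L ⊆ Ioo 0 1) (hup : ∀ v ∈ L, ∀ w, v ≤ w → w < 1 → w ∈ L)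
    {a b : ℝ} (ha : a ∈ Ioo 0 1) (hb : b ∈ Ioo 0 1) (hab : a ≤ b) :
    ewIntegral F b * levelTail G L a + ewIntegral G b * levelTail F L b ≤
        ewIntegral G b * levelTail F L a + ewIntegral F b * levelTail G L b ∧
      ewIntegral G b * levelTail F L b ≤ ewIntegral F b * levelTail G L b := by
  rcases L.eq_empty_or_nonempty with rfl | hne
  · simp [levelTail]
  simp only [levelTail_eq_ewIntegral hF hFs hFc hL hup hne ha,
    levelTail_eq_ewIntegral hF hFs hFc hL hup hne hb,
    levelTail_eq_ewIntegral hG hGs hGc hL hup hne ha,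
    levelTail_eq_ewIntegral hG hGs hGc hL hup hne hb]
  obtain ⟨v, hv⟩ := hne
  have hm : max b (sInf L) ∈ Ioo 0 1 := ⟨hb.1.trans_le (le_max_left _ _),
    max_lt hb.2 ((csInf_le ⟨0, fun w hw => (hL hw).1.le⟩ hv).trans_lt (hL hv).2)⟩
  exact ⟨cross_max_le hcross ha hb hab,
    (hcross b _ hb hm (le_max_left _ _)).trans_eq (mul_comm _ _)⟩

end DistortedExcessWealth

section Cross

variable {F G h : ℝ → ℝ}
  (hF : IsNonnegCDF F) (hFs : StrictMonoOn F (Ici 0)) (hFc : Continuous F)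
  (hFi : IntegrableOn (fun x => 1 - F x) (Ioi 0))
  (hG : IsNonnegCDF G) (hGs : StrictMonoOn G (Ici 0)) (hGc : Continuous G)
  (hGi : IntegrableOn (fun x => 1 - G x) (Ioi 0))
  (hh : Antistarshaped h) (h1 : h 1 = 1)
  (hWF : IntegrableOn (fun x => h (1 - F x)) (Ioi 0))
  (hWG : IntegrableOn (fun x => h (1 - G x)) (Ioi 0))
  (hcross : ∀ u v, u ∈ Ioo (0:ℝ) 1 → v ∈ Ioo (0:ℝ) 1 → u ≤ v →
    ewIntegral G u * ewIntegral F v ≤ ewIntegral G v * ewIntegral F u)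
include hF hFs hFc hFi hG hGs hGc hGi hh h1 hWF hWG hcross

theorem distortedEwIntegral_increment_cross {a b : ℝ} (ha : a ∈ Ioo 0 1) (hb : b ∈ Ioo 0 1)
    (hab : a ≤ b) :
    ewIntegral F b * distortedEwIntegral h G a + ewIntegral G b * distortedEwIntegral h F b ≤
      ewIntegral G b * distortedEwIntegral h F a + ewIntegral F b * distortedEwIntegral h G b := by
  have hVF := (ewIntegral_pos hF hFs hFc hFi hb).le
  have hVG := (ewIntegral_pos hG hGs hGc hGi hb).le
  have hW {X : ℝ → ℝ} (hX : IsNonnegCDF X) (hXs : StrictMonoOn X (Ici 0)) (u : ℝ) :=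
    distortedEwIntegral_nonneg hX hXs hh h1 u
  have hι {X : ℝ → ℝ} (hX : IsNonnegCDF X) (t u : ℝ) :=
    levelTail_nonneg hX (distortionSuperlevel h t) u
  have hmeas {X : ℝ → ℝ} {u c : ℝ} (hX : IsNonnegCDF X) (hXc : Continuous X)
      (hXi : IntegrableOn (fun x => 1 - X x) (Ioi 0)) (hu : u ∈ Ioo 0 1) (hc : 0 ≤ c) :
      Measurable fun t => ENNReal.ofReal (c * levelTail X (distortionSuperlevel h t) u) :=
    ((antitone_levelTail_distortionSuperlevel hX hXc hXi hu).const_mul hc).measurable.ennreal_ofReal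
  rw [← ENNReal.ofReal_le_ofReal_iff (by have := hW hF hFs a; have := hW hG hGs b; positivity),
    ENNReal.ofReal_add (mul_nonneg hVF (hW hG hGs a)) (mul_nonneg hVG (hW hF hFs b)),
    ENNReal.ofReal_add (mul_nonneg hVG (hW hF hFs a)) (mul_nonneg hVF (hW hG hGs b)),
    ofReal_mul_distortedEwIntegral_eq_lintegral hG hGs hGc hGi hh h1 hWG ha hVF,
    ofReal_mul_distortedEwIntegral_eq_lintegral hF hFs hFc hFi hh h1 hWF hb hVG,
    ofReal_mul_distortedEwIntegral_eq_lintegral hF hFs hFc hFi hh h1 hWF ha hVG,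
    ofReal_mul_distortedEwIntegral_eq_lintegral hG hGs hGc hGi hh h1 hWG hb hVF,
    ← lintegral_add_left (hmeas hG hGc hGi ha hVF), ← lintegral_add_left (hmeas hF hFc hFi ha hVG)]
  refine lintegral_mono fun t => ?_
  rw [← ENNReal.ofReal_add (mul_nonneg hVF (hι hG t a)) (mul_nonneg hVG (hι hF t b)),
    ← ENNReal.ofReal_add (mul_nonneg hVG (hι hF t a)) (mul_nonneg hVF (hι hG t b))]
  exact ENNReal.ofReal_le_ofReal (levelTail_cross hF hFs hFc hG hGs hGc hcross
    (fun _ hv => hv.1) (fun _ hv _ => distortionSuperlevel_upper hh hv) ha hb hab).1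

theorem distortedEwIntegral_tail_cross {b : ℝ} (hb : b ∈ Ioo 0 1) :
    ewIntegral G b * distortedEwIntegral h F b ≤ ewIntegral F b * distortedEwIntegral h G b := by
  have hVF := (ewIntegral_pos hF hFs hFc hFi hb).le
  have hVG := (ewIntegral_pos hG hGs hGc hGi hb).le
  rw [← ENNReal.ofReal_le_ofReal_iff (mul_nonneg hVF (distortedEwIntegral_nonneg hG hGs hh h1 b)),
    ofReal_mul_distortedEwIntegral_eq_lintegral hF hFs hFc hFi hh h1 hWF hb hVG,
    ofReal_mul_distortedEwIntegral_eq_lintegral hG hGs hGc hGi hh h1 hWG hb hVF]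
  exact lintegral_mono fun t => ENNReal.ofReal_le_ofReal (levelTail_cross hF hFs hFc hG hGs hGc
    hcross (fun _ hv => hv.1) (fun _ hv _ => distortionSuperlevel_upper hh hv) hb hb le_rfl).2

theorem distortedEwIntegral_cross {a b : ℝ} (ha : a ∈ Ioo 0 1) (hb : b ∈ Ioo 0 1) (hab : a ≤ b) :
    distortedEwIntegral h G a * distortedEwIntegral h F b ≤
      distortedEwIntegral h G b * distortedEwIntegral h F a := by
  have hincr := distortedEwIntegral_increment_cross hF hFs hFc hFi hG hGs hGc hGi hh h1 hWF hWG
    hcross ha hb hab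
  have htail := distortedEwIntegral_tail_cross hF hFs hFc hFi hG hGs hGc hGi hh h1 hWF hWG
    hcross hb
  have hanti := distortedEwIntegral_anti hF hFs hFc hh h1 hWF ha hb hab
  refine le_of_mul_le_mul_left ?_ (ewIntegral_pos hF hFs hFc hFi hb)
  nlinarith [mul_le_mul_of_nonneg_right hincr (distortedEwIntegral_nonneg hF hFs hh h1 b),
    mul_nonneg (sub_nonneg.2 hanti) (sub_nonneg.2 htail)]

end Cross

/-- The level of `F` that corresponds to the level `p` of `distortedCDF h F`. -/
noncomputable def distortedLevel (h : ℝ → ℝ) (p : ℝ) : ℝ :=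
  1 - sSup {s | s ∈ Icc (0:ℝ) 1 ∧ h s ≤ 1 - p}

section DistortedLevel

variable {F h : ℝ → ℝ}

theorem apply_le_iff_le_sSup (hmono : MonotoneOn h (Icc 0 1))
    (hleft : ∀ p ∈ Ioc (0:ℝ) 1, ContinuousWithinAt h (Iio p) p) (h0 : h 0 = 0) {p : ℝ}
    (hp : p ≤ 1) {s : ℝ} (hs : s ∈ Icc (0:ℝ) 1) :
    h s ≤ 1 - p ↔ s ≤ sSup {s | s ∈ Icc (0:ℝ) 1 ∧ h s ≤ 1 - p} := by
  set A := {s | s ∈ Icc (0:ℝ) 1 ∧ h s ≤ 1 - p}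
  have hbdd : BddAbove A := ⟨1, fun s hs => hs.1.2⟩
  have hne : A.Nonempty := ⟨0, ⟨le_rfl, zero_le_one⟩, by rw [h0]; linarith⟩
  have hS : sSup A ∈ Icc (0:ℝ) 1 := ⟨hne.some_mem.1.1.trans (le_csSup hbdd hne.some_mem),
    csSup_le hne fun s hs => hs.1.2⟩
  have hhS : h (sSup A) ≤ 1 - p := by
    rcases hS.1.eq_or_lt with hS0 | hS0
    · rw [← hS0, h0]; linarith
    refine le_of_tendsto (hleft _ ⟨hS0, hS.2⟩) ?_
    filter_upwards [Ioo_mem_nhdsLT hS0] with s hs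
    obtain ⟨r, hr, hsr⟩ := exists_lt_of_lt_csSup hne hs.2
    exact (hmono ⟨hs.1.le, hs.2.le.trans hS.2⟩ hr.1 hsr.le).trans hr.2
  exact ⟨fun hhs => le_csSup hbdd ⟨hs, hhs⟩, fun hsS => (hmono hs hS hsS).trans hhS⟩

theorem le_distortedCDF_iff (hF : IsNonnegCDF F) (hmono : MonotoneOn h (Icc 0 1))
    (hleft : ∀ p ∈ Ioc (0:ℝ) 1, ContinuousWithinAt h (Iio p) p) (h0 : h 0 = 0) {p : ℝ}
    (hp : p ≤ 1) (x : ℝ) : p ≤ distortedCDF h F x ↔ distortedLevel h p ≤ F x := by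
  have := apply_le_iff_le_sSup hmono hleft h0 hp (hF.one_sub_mem_Icc x)
  rw [distortedCDF, distortedLevel]
  constructor
  · intro hx; linarith [this.1 (by linarith)]
  · intro hx; linarith [this.2 (by linarith)]

theorem quantile_distortedCDF_s6 (hF : IsNonnegCDF F) (hmono : MonotoneOn h (Icc 0 1))
    (hleft : ∀ p ∈ Ioc (0:ℝ) 1, ContinuousWithinAt h (Iio p) p) (h0 : h 0 = 0) {p : ℝ}
    (hp : p ≤ 1) : quantile (distortedCDF h F) p = quantile F (distortedLevel h p) := by
  simp only [quantile, le_distortedCDF_iff hF hmono hleft h0 hp]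

theorem distortedLevel_pos (hmono : MonotoneOn h (Icc 0 1))
    (hleft : ∀ p ∈ Ioc (0:ℝ) 1, ContinuousWithinAt h (Iio p) p) (h0 : h 0 = 0) (h1 : h 1 = 1)
    {p : ℝ} (hp : p ∈ Ioo 0 1) : 0 < distortedLevel h p := by
  have := apply_le_iff_le_sSup hmono hleft h0 hp.2.le ⟨zero_le_one, le_rfl⟩
  rw [h1] at this
  rw [distortedLevel, sub_pos]
  exact not_le.1 fun h => by linarith [hp.1, this.2 h]

theorem distortedLevel_mono (h0 : h 0 = 0) {p q : ℝ} (hpq : p ≤ q) (hq : q ≤ 1) :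
    distortedLevel h p ≤ distortedLevel h q := by
  have hsub : {s | s ∈ Icc (0:ℝ) 1 ∧ h s ≤ 1 - q} ⊆ {s | s ∈ Icc (0:ℝ) 1 ∧ h s ≤ 1 - p} :=
    fun s hs => ⟨hs.1, by linarith [hs.2]⟩
  have hne : (0:ℝ) ∈ {s | s ∈ Icc (0:ℝ) 1 ∧ h s ≤ 1 - q} :=
    ⟨⟨le_rfl, zero_le_one⟩, by rw [h0]; linarith⟩
  exact sub_le_sub_left (csSup_le_csSup ⟨1, fun s hs => hs.1.2⟩ ⟨0, hne⟩ hsub) 1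

theorem distortedLevel_lt_one (hF : IsNonnegCDF F) (hFs : StrictMonoOn F (Ici 0))
    (hmono : MonotoneOn h (Icc 0 1))
    (hleft : ∀ p ∈ Ioc (0:ℝ) 1, ContinuousWithinAt h (Iio p) p) (h0 : h 0 = 0)
    (hWi : IntegrableOn (fun x => h (1 - F x)) (Ioi 0)) {p : ℝ} (hp : p ∈ Ioo 0 1) :
    distortedLevel h p < 1 := by
  by_contra! hlev
  have hbig : {x | 1 - p ≤ h (1 - F x)} = univ := eq_univ_of_forall fun x => by
    show 1 - p ≤ h (1 - F x)
    have := mt (le_distortedCDF_iff hF hmono hleft h0 hp.2.le x).1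
      (not_le.2 ((hF.lt_one_s6 hFs x).trans_le hlev))
    rw [distortedCDF] at this
    linarith [not_le.1 this]
  have := hWi.measure_ge_lt_top (sub_pos.2 hp.2)
  rw [hbig, Measure.restrict_apply_univ, Real.volume_Ioi] at this
  exact lt_irrefl _ this

end DistortedLevel

section DistortedTail

variable {F h : ℝ → ℝ}

theorem ewIntegral_distortedCDF (hF : IsNonnegCDF F) (hmono : MonotoneOn h (Icc 0 1))
    (hleft : ∀ p ∈ Ioc (0:ℝ) 1, ContinuousWithinAt h (Iio p) p) (h0 : h 0 = 0) {p : ℝ}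
    (hp : p ≤ 1) :
    ewIntegral (distortedCDF h F) p = distortedEwIntegral h F (distortedLevel h p) := by
  simp only [ewIntegral, quantile_distortedCDF_s6 hF hmono hleft h0 hp, distortedCDF, sub_sub_cancel,
    distortedEwIntegral]

theorem distortedEwIntegral_of_not_integrableOn (hF : IsNonnegCDF F)
    (hmono : MonotoneOn h (Icc 0 1)) (h0 : h 0 = 0) (h1 : h 1 = 1)
    (hWi : ¬ IntegrableOn (fun x => h (1 - F x)) (Ioi 0)) {u : ℝ} (hu : 0 < u) :
    distortedEwIntegral h F u = 0 := by
  have hQ := hF.quantile_nonneg hu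
  have hS := hF.one_sub_mem_Icc
  have hanti : Antitone fun x => h (1 - F x) := fun x y hxy =>
    hmono (hS y) (hS x) (by linarith [hF.1 hxy])
  refine integral_undef fun hint => hWi ?_
  rw [← Ioc_union_Ioi_eq_Ioi hQ]
  refine IntegrableOn.union ?_ hint
  refine Measure.integrableOn_of_bounded (M := 1) measure_Ioc_lt_top.ne
    hanti.measurable.aestronglyMeasurable (ae_of_all _ fun x => ?_)
  have h0x := hmono ⟨le_rfl, zero_le_one⟩ (hS x) (hS x).1
  have h1x := hmono (hS x) ⟨zero_le_one, le_rfl⟩ (hS x).2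
  rw [h0] at h0x; rw [h1] at h1x
  rw [Real.norm_eq_abs, abs_le]
  constructor <;> linarith

theorem ewIntegral_distortedCDF_of_not_integrableOn (hF : IsNonnegCDF F)
    (hmono : MonotoneOn h (Icc 0 1))
    (hleft : ∀ p ∈ Ioc (0:ℝ) 1, ContinuousWithinAt h (Iio p) p) (h0 : h 0 = 0) (h1 : h 1 = 1)
    (hWi : ¬ IntegrableOn (fun x => h (1 - F x)) (Ioi 0)) {p : ℝ} (hp : p ∈ Ioo 0 1) :
    ewIntegral (distortedCDF h F) p = 0 := by
  rw [ewIntegral_distortedCDF hF hmono hleft h0 hp.2.le,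
    distortedEwIntegral_of_not_integrableOn hF hmono h0 h1 hWi
      (distortedLevel_pos hmono hleft h0 h1 hp)]

end DistortedTail

theorem dmrl_preserved_by_concave_distortion_general
    (F G f g h : ℝ → ℝ)
    (hF : IsNonnegCDF F) (hG : IsNonnegCDF G)
    (hFstrict : StrictMonoOn F (Ici 0)) (hGstrict : StrictMonoOn G (Ici 0))
    (hfd : ∀ x : ℝ, HasDerivAt F (f x) x) (hgd : ∀ x : ℝ, HasDerivAt G (g x) x)
    (hFmean : IntegrableOn (fun x => 1 - F x) (Ioi 0) volume)
    (hGmean : IntegrableOn (fun x => 1 - G x) (Ioi 0) volume)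
    (hdist : IsDistortionFn h)
    (hconc : ConcaveOn ℝ (Icc 0 1) h)
    (hle : DMRL_le F G) :
    DMRL_le (distortedCDF h F) (distortedCDF h G) := by
  obtain ⟨hmono, hleft, h0, h1, -⟩ := hdist
  have hFc : Continuous F := continuous_iff_continuousAt.2 fun x => (hfd x).continuousAt
  have hGc : Continuous G := continuous_iff_continuousAt.2 fun x => (hgd x).continuousAt
  intro p hp q hq hpq
  by_cases hWF : IntegrableOn (fun x => h (1 - F x)) (Ioi 0)
  swap
  · simp [ewIntegral_distortedCDF_of_not_integrableOn hF hmono hleft h0 h1 hWF, hp, hq]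
  by_cases hWG : IntegrableOn (fun x => h (1 - G x)) (Ioi 0)
  swap
  · simp [ewIntegral_distortedCDF_of_not_integrableOn hG hmono hleft h0 h1 hWG, hp, hq]
  have hh := hconc.antistarshaped h0
  have ha : distortedLevel h p ∈ Ioo 0 1 := ⟨distortedLevel_pos hmono hleft h0 h1 hp,
    distortedLevel_lt_one hF hFstrict hmono hleft h0 hWF hp⟩
  have hb : distortedLevel h q ∈ Ioo 0 1 := ⟨distortedLevel_pos hmono hleft h0 h1 hq,
    distortedLevel_lt_one hF hFstrict hmono hleft h0 hWF hq⟩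
  simp only [ewIntegral_distortedCDF hF hmono hleft h0 hp.2.le,
    ewIntegral_distortedCDF hF hmono hleft h0 hq.2.le,
    ewIntegral_distortedCDF hG hmono hleft h0 hp.2.le,
    ewIntegral_distortedCDF hG hmono hleft h0 hq.2.le]
  rw [div_le_div_iff₀ (distortedEwIntegral_pos hF hFstrict hFc hFmean hh h1 hWF ha)
    (distortedEwIntegral_pos hF hFstrict hFc hFmean hh h1 hWF hb)]
  exact distortedEwIntegral_cross hF hFstrict hFc hFmean hG hGstrict hGc hGmean hh h1 hWF hWG
    (fun _ _ => hle.mul_le_mul hF hFstrict hFc hFmean) ha hb (distortedLevel_mono h0 hpq hq.2.le)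

/-- **Remark 1 (preservation of the dmrl order by concave distortions).**
Let `X`, `Y` be nonnegative absolutely continuous random variables with finite means and
strictly increasing distribution functions `F`, `G`, and let `h` be a concave, strictly
increasing, differentiable distortion function.  If `X ≤_dmrl Y`, then `X_h ≤_dmrl Y_h`. -/
theorem dmrl_preserved_by_concave_distortion
    (F G f g h : ℝ → ℝ)
    (hF : IsNonnegCDF F) (hG : IsNonnegCDF G)
    (hFstrict : StrictMonoOn F (Ici 0)) (hGstrict : StrictMonoOn G (Ici 0))
    (hfd : ∀ x : ℝ, HasDerivAt F (f x) x) (hgd : ∀ x : ℝ, HasDerivAt G (g x) x)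
    (hFmean : IntegrableOn (fun x => 1 - F x) (Ioi 0) volume)
    (hGmean : IntegrableOn (fun x => 1 - G x) (Ioi 0) volume)
    (hdist : IsDistortionFn h) (hstrict : StrictMonoOn h (Icc 0 1))
    (hdiff : ∀ p ∈ Ioo (0:ℝ) 1, DifferentiableAt ℝ h p)
    (hconc : ConcaveOn ℝ (Icc 0 1) h)
    (hle : DMRL_le F G) :
    DMRL_le (distortedCDF h F) (distortedCDF h G) :=
  dmrl_preserved_by_concave_distortion_general F G f g h hF hG hFstrict hGstrict hfd hgd hFmean
    hGmean hdist hconc hle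
end
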